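/- arXiv:1507.08743 — 14 statements merged into one kernel-verified Lean document; each statement's English description precedes it below -/
import Mathlib

section
/- Let a, b, c be real numbers with max(|a|,|b|) > 0 and |c| ≤ 2·| |a| − |b| |. Then the Mahler measure of P_{a,b,c} satisfies (1/(2π)²) ∫₀^{2π} ∫₀^{2π} log |2a cos θ₁ + 2b cos θ₂ + c| dθ₁ dθ₂ = log max(|a|, |b|). -/
open Real MeasureTheory intervalIntegral

/-!
Whenever `|t| ≤ 2|a|` we can write `t = 2a cos φ`, and then on the unit circle `z = e^{iθ}`
`|2a cos θ + t| = |a (z + e^{iφ}) (z + e^{-iφ})|`. The Mahler measure is multiplicative and that of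
`z + w` is `max 1 |w|`, so, both roots lying on the unit circle, the average of `log |2a cos θ + t|`
over `θ` is `log |a|`.

If `|a| ≤ |b|`, the hypothesis on `c` gives `|2a cos θ₁ + c| ≤ 2|b|` for every `θ₁`, so the inner
integral over `θ₂` equals `2π log |b|` identically. If `|b| ≤ |a|`, the same holds for the integral
over `θ₁`, and Fubini applies: the integrand is bounded above and these slice integrals are bounded
below, which bounds the `L¹` norms of the slices uniformly.
-/

theorem integrable_prod_of_le_of_le_integral {α β : Type*} [MeasurableSpace α]
    [MeasurableSpace β] {μ : Measure α} {ν : Measure β} [IsFiniteMeasure μ] [IsFiniteMeasure ν]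
    {f : α × β → ℝ} {C L : ℝ} (hf : AEStronglyMeasurable f (μ.prod ν)) (hle : ∀ p, f p ≤ C)
    (hint : ∀ y, Integrable (fun x => f (x, y)) μ) (hL : ∀ y, L ≤ ∫ x, f (x, y) ∂μ) :
    Integrable f (μ.prod ν) := by
  refine (integrable_prod_iff' hf).2 ⟨.of_forall hint, ?_⟩
  refine (integrable_const (2 * max C 0 * μ.real Set.univ - L)).mono'
    hf.norm.prod_swap.integral_prod_right' (.of_forall fun y => ?_)
  -- `|f| = 2 f⁺ - f ≤ 2 C⁺ - f`
  have habs : ∀ x, ‖f (x, y)‖ ≤ 2 * max C 0 - f (x, y) := fun x => by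
    rw [Real.norm_eq_abs]
    cases abs_cases (f (x, y)) <;> linarith [hle (x, y), le_max_left C 0, le_max_right C 0]
  calc ‖∫ x, ‖f (x, y)‖ ∂μ‖ = ∫ x, ‖f (x, y)‖ ∂μ := by
        rw [Real.norm_eq_abs, abs_of_nonneg (integral_nonneg fun _ => norm_nonneg _)]
    _ ≤ ∫ x, (2 * max C 0 - f (x, y)) ∂μ :=
        integral_mono (hint y).norm ((integrable_const _).sub (hint y)) habs
    _ = 2 * max C 0 * μ.real Set.univ - ∫ x, f (x, y) ∂μ := by
        rw [integral_sub (integrable_const _) (hint y), MeasureTheory.integral_const,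
          smul_eq_mul, mul_comm]
    _ ≤ 2 * max C 0 * μ.real Set.univ - L := by linarith [hL y]

theorem intervalIntegral_integral_swap {f : ℝ → ℝ → ℝ} {a b c d : ℝ} (hab : a ≤ b)
    (hcd : c ≤ d) (hf : Integrable (Function.uncurry f)
      ((volume.restrict (Set.Ioc a b)).prod (volume.restrict (Set.Ioc c d)))) :
    ∫ x in a..b, ∫ y in c..d, f x y = ∫ y in c..d, ∫ x in a..b, f x y := by
  simp only [integral_of_le hab, integral_of_le hcd]
  exact integral_integral_swap hf

theorem exists_eq_two_mul_mul_cos {a t : ℝ} (ht : |t| ≤ 2 * |a|) : ∃ φ, t = 2 * a * cos φ := by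
  rcases eq_or_ne a 0 with rfl | ha
  · exact ⟨0, by simpa using ht⟩
  · have : |t / (2 * a)| ≤ 1 := by
      rwa [abs_div, abs_mul, abs_two, div_le_one (by positivity)]
    obtain ⟨h₁, h₂⟩ := abs_le.1 this
    exact ⟨arccos (t / (2 * a)), by rw [cos_arccos h₁ h₂]; field_simp⟩

section

open Complex Polynomial

noncomputable def cosAddCosPoly (a φ : ℝ) : ℂ[X] :=
  C (a : ℂ) * (X + C (exp (φ * I))) * (X + C (exp (-φ * I)))

theorem norm_eval_circleMap_cosAddCosPoly (a φ θ : ℝ) :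
    ‖(cosAddCosPoly a φ).eval (circleMap 0 1 θ)‖ = |2 * a * Real.cos θ + 2 * a * Real.cos φ| := by
  have hθ : exp (θ * I) * exp (-(θ * I)) = 1 := by rw [← Complex.exp_add]; simp
  have hφ : exp (φ * I) * exp (-(φ * I)) = 1 := by rw [← Complex.exp_add]; simp
  have key : (cosAddCosPoly a φ).eval (circleMap 0 1 θ) =
      exp (θ * I) * ((2 * a * Real.cos θ + 2 * a * Real.cos φ : ℝ) : ℂ) := by
    simp only [cosAddCosPoly, eval_mul, eval_add, eval_C, eval_X, circleMap_zero, ofReal_one,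
      one_mul]
    push_cast
    rw [Complex.cos, Complex.cos]
    simp only [neg_mul]
    linear_combination (a : ℂ) * hφ - (a : ℂ) * hθ
  rw [key, norm_mul, Complex.norm_exp_ofReal_mul_I, one_mul, Complex.norm_real, Real.norm_eq_abs]

theorem mahlerMeasure_cosAddCosPoly (a φ : ℝ) : (cosAddCosPoly a φ).mahlerMeasure = |a| := by
  simp only [cosAddCosPoly, mahlerMeasure_mul, mahlerMeasure_const, mahlerMeasure_X_add_C,
    Complex.norm_exp_ofReal_mul_I, ← ofReal_neg, max_self, mul_one, Complex.norm_real,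
    Real.norm_eq_abs]

theorem intervalIntegrable_log_abs_two_mul_cos_add {a t : ℝ} (ht : |t| ≤ 2 * |a|) :
    IntervalIntegrable (fun θ => Real.log |2 * a * Real.cos θ + t|) volume 0 (2 * π) := by
  obtain ⟨φ, rfl⟩ := exists_eq_two_mul_mul_cos ht
  simpa only [norm_eval_circleMap_cosAddCosPoly] using
    (cosAddCosPoly a φ).intervalIntegrable_mahlerMeasure

theorem integral_log_abs_two_mul_cos_add {a t : ℝ} (ht : |t| ≤ 2 * |a|) :
    ∫ θ in (0:ℝ)..2 * π, Real.log |2 * a * Real.cos θ + t| = 2 * π * Real.log |a| := by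
  obtain ⟨φ, rfl⟩ := exists_eq_two_mul_mul_cos ht
  have h := (cosAddCosPoly a φ).logMahlerMeasure_eq_log_MahlerMeasure
  rw [logMahlerMeasure_def, circleAverage_def, smul_eq_mul, mahlerMeasure_cosAddCosPoly] at h
  simp only [norm_eval_circleMap_cosAddCosPoly] at h
  rw [← h]
  field_simp

end

theorem abs_two_mul_mul_cos_add_le (a t θ : ℝ) : |2 * a * cos θ + t| ≤ 2 * |a| + |t| := by
  calc |2 * a * cos θ + t| ≤ |2 * a * cos θ| + |t| := abs_add_le _ _
    _ ≤ 2 * |a| + |t| := by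
      rw [abs_mul, abs_mul, abs_two]
      nlinarith [abs_cos_le_one θ, abs_nonneg a]

theorem integral_integral_log_abs_two_mul_cos_add_two_mul_cos_add {a b c : ℝ}
    (h : |c| ≤ 2 * (|b| - |a|)) :
    ∫ θ₁ in (0:ℝ)..2 * π, ∫ θ₂ in (0:ℝ)..2 * π, log |2 * a * cos θ₁ + 2 * b * cos θ₂ + c| =
      2 * π * (2 * π * log |b|) := by
  have hinner : ∀ θ₁, ∫ θ₂ in (0:ℝ)..2 * π, log |2 * a * cos θ₁ + 2 * b * cos θ₂ + c| =
      2 * π * log |b| := fun θ₁ => by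
    simp only [show ∀ θ₂, 2 * a * cos θ₁ + 2 * b * cos θ₂ + c =
      2 * b * cos θ₂ + (2 * a * cos θ₁ + c) from fun _ => by ring]
    exact integral_log_abs_two_mul_cos_add (a := b) (t := 2 * a * cos θ₁ + c)
      (by linarith [abs_two_mul_mul_cos_add_le a c θ₁])
  simp_rw [hinner, intervalIntegral.integral_const, smul_eq_mul, sub_zero]

theorem integrable_log_abs_two_mul_cos_add_two_mul_cos_add {a b c : ℝ}
    (h : |c| ≤ 2 * (|a| - |b|)) :
    Integrable (Function.uncurry fun θ₁ θ₂ => log |2 * a * cos θ₁ + 2 * b * cos θ₂ + c|)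
      ((volume.restrict (Set.Ioc 0 (2 * π))).prod (volume.restrict (Set.Ioc 0 (2 * π)))) := by
  have hslice : ∀ θ₂, |2 * b * cos θ₂ + c| ≤ 2 * |a| := fun θ₂ => by
    linarith [abs_two_mul_mul_cos_add_le b c θ₂]
  refine integrable_prod_of_le_of_le_integral (C := 4 * |a|) (L := 2 * π * log |a|)
    (Measurable.aestronglyMeasurable (by fun_prop)) (fun p => ?_) (fun θ₂ => ?_)
    (fun θ₂ => ?_) <;> simp only [Function.uncurry_apply_pair, add_assoc]
  · calc log |2 * a * cos p.1 + (2 * b * cos p.2 + c)|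
        ≤ |2 * a * cos p.1 + (2 * b * cos p.2 + c)| := log_le_self (abs_nonneg _)
      _ ≤ 4 * |a| := by
        linarith [abs_two_mul_mul_cos_add_le a (2 * b * cos p.2 + c) p.1, hslice p.2]
  · exact (intervalIntegrable_iff_integrableOn_Ioc_of_le two_pi_pos.le).1
      (intervalIntegrable_log_abs_two_mul_cos_add (hslice θ₂))
  · rw [← integral_of_le two_pi_pos.le, integral_log_abs_two_mul_cos_add (hslice θ₂)]

theorem mahler_measure_Pabc_eq_log_max_general (a b c : ℝ)
    (hc : |c| ≤ 2 * abs (|a| - |b|)) :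
    (1 / (2 * π) ^ 2) *
      ∫ θ₁ in (0:ℝ)..(2 * π), ∫ θ₂ in (0:ℝ)..(2 * π),
        Real.log |2 * a * Real.cos θ₁ + 2 * b * Real.cos θ₂ + c| =
      Real.log (max |a| |b|) := by
  rcases le_total |a| |b| with h | h
  · rw [abs_sub_comm, abs_of_nonneg (sub_nonneg.2 h)] at hc
    rw [max_eq_right h, integral_integral_log_abs_two_mul_cos_add_two_mul_cos_add hc]
    field_simp
  · rw [abs_of_nonneg (sub_nonneg.2 h)] at hc
    rw [max_eq_left h, intervalIntegral_integral_swap two_pi_pos.le two_pi_pos.le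
      (integrable_log_abs_two_mul_cos_add_two_mul_cos_add hc)]
    simp only [add_comm (2 * a * cos _) (2 * b * cos _)]
    rw [integral_integral_log_abs_two_mul_cos_add_two_mul_cos_add hc]
    field_simp

/-- Theorem 1 (`th-log`): if `a, b, c` are real, not both of `a, b` vanish, and
`|c| ≤ 2 * abs (|a| - |b|)`, then the Mahler measure of
`P_{a,b,c}(x,y) = a(x + 1/x) + b(y + 1/y) + c` equals `log max(|a|, |b|)`. -/
theorem mahler_measure_Pabc_eq_log_max (a b c : ℝ)
    (hab : 0 < max |a| |b|) (hc : |c| ≤ 2 * abs (|a| - |b|)) :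
    (1 / (2 * π) ^ 2) *
      ∫ θ₁ in (0:ℝ)..(2 * π), ∫ θ₂ in (0:ℝ)..(2 * π),
        Real.log |2 * a * Real.cos θ₁ + 2 * b * Real.cos θ₂ + c| =
      Real.log (max |a| |b|) :=
  mahler_measure_Pabc_eq_log_max_general a b c hc
end

section
/- Let r be a real number with |r| ≤ 2. Then ∫₀^{2π} log |e^{2iθ} + r·e^{iθ} + 1| dθ = 0; equivalently, ∫₀^{2π} log |2 cos θ + r| dθ = 0. -/
open Real Complex intervalIntegral

/-!
With `cos α = -r/2` and `a = e^{iα}` we have `x² + r x + 1 = (x - a)(x - ā)`. The circle average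
of `log |x - a|` over the unit circle is `log⁺ |a|`, which vanishes since `|a| = 1`; hence the
logarithmic Mahler measure of the quadratic is `0`. At `x = e^{iθ}` the quadratic equals
`e^{iθ} (2 cos θ + r)`, which gives the second form.
-/

open Polynomial

lemma X_sub_C_mul_X_sub_C_conj {a : ℂ} (ha : ‖a‖ = 1) :
    (X - C a) * (X - C (starRingEnd ℂ a)) = X ^ 2 - C (2 * (a.re : ℂ)) * X + 1 := by
  have hprod : a * starRingEnd ℂ a = 1 := by
    rw [Complex.mul_conj, Complex.normSq_eq_norm_sq, ha, one_pow, Complex.ofReal_one]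
  have hsum : a + starRingEnd ℂ a = 2 * (a.re : ℂ) := by
    rw [Complex.add_conj]; push_cast; ring
  calc (X - C a) * (X - C (starRingEnd ℂ a))
      = X ^ 2 - C (a + starRingEnd ℂ a) * X + C (a * starRingEnd ℂ a) := by
        simp only [map_add, map_mul]; ring
    _ = X ^ 2 - C (2 * (a.re : ℂ)) * X + 1 := by rw [hsum, hprod, map_one]

theorem logMahlerMeasure_X_sq_add_C_mul_X_add_one {r : ℝ} (hr : |r| ≤ 2) :
    (X ^ 2 + C (r : ℂ) * X + 1 : ℂ[X]).logMahlerMeasure = 0 := by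
  rw [abs_le] at hr
  set a : ℂ := Complex.exp (Real.arccos (-(r / 2)) * I)
  have ha : ‖a‖ = 1 := Complex.norm_exp_ofReal_mul_I _
  have hre : a.re = -(r / 2) := by
    rw [Complex.exp_ofReal_mul_I_re, Real.cos_arccos (by linarith) (by linarith)]
  have hfactor : (X ^ 2 + C (r : ℂ) * X + 1 : ℂ[X]) = (X - C a) * (X - C (starRingEnd ℂ a)) := by
    rw [X_sub_C_mul_X_sub_C_conj ha, hre,
      show 2 * ((-(r / 2) : ℝ) : ℂ) = -(r : ℂ) by push_cast; ring, map_neg]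
    ring
  rw [hfactor, logMahlerMeasure_mul_eq_add_logMahlerMeasure
      (mul_ne_zero (X_sub_C_ne_zero _) (X_sub_C_ne_zero _)),
    logMahlerMeasure_X_sub_C, logMahlerMeasure_X_sub_C, Complex.norm_conj, ha, posLog_one,
    add_zero]

lemma eval_circleMap_X_sq_add_C_mul_X_add_one (r θ : ℝ) :
    (X ^ 2 + C (r : ℂ) * X + 1 : ℂ[X]).eval (circleMap 0 1 θ) =
      Complex.exp (2 * I * θ) + (r : ℂ) * Complex.exp (I * θ) + 1 := by
  simp only [circleMap_zero, Complex.ofReal_one, one_mul, eval_add, eval_mul, eval_pow, eval_X,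
    eval_C, eval_one, ← Complex.exp_nat_mul]
  push_cast
  ring_nf

lemma exp_two_mul_I_add_mul_exp_add_one (r θ : ℝ) :
    Complex.exp (2 * I * θ) + (r : ℂ) * Complex.exp (I * θ) + 1 =
      Complex.exp (θ * I) * ((2 * Real.cos θ + r : ℝ) : ℂ) := by
  have h1 : Complex.exp (I * θ) = Complex.exp (θ * I) := by rw [mul_comm]
  have h2 : Complex.exp (2 * I * θ) = Complex.exp (θ * I) * Complex.exp (θ * I) := by
    rw [← Complex.exp_add]; ring_nf
  have hinv : Complex.exp (θ * I) * Complex.exp (-θ * I) = 1 := by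
    rw [← Complex.exp_add]; simp
  push_cast
  rw [Complex.two_cos]
  linear_combination h2 + r * h1 - hinv

lemma norm_exp_two_mul_I_add_mul_exp_add_one (r θ : ℝ) :
    ‖Complex.exp (2 * I * θ) + (r : ℂ) * Complex.exp (I * θ) + 1‖ = |2 * Real.cos θ + r| := by
  rw [exp_two_mul_I_add_mul_exp_add_one, norm_mul, Complex.norm_exp_ofReal_mul_I, one_mul,
    Complex.norm_real, Real.norm_eq_abs]

/-- Jensen-formula step: for real `r` with `|r| ≤ 2`, the one-variable Mahler measure of
`x² + r x + 1` vanishes; that is, `∫₀^{2π} log |e^{2iθ} + r e^{iθ} + 1| dθ = 0`, equivalently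
`∫₀^{2π} log |2 cos θ + r| dθ = 0`. -/
theorem jensen_step (r : ℝ) (hr : |r| ≤ 2) :
    (∫ θ in (0:ℝ)..(2 * π),
        Real.log ‖Complex.exp (2 * Complex.I * θ) +
          (r : ℂ) * Complex.exp (Complex.I * θ) + 1‖ = 0) ∧
    (∫ θ in (0:ℝ)..(2 * π), Real.log |2 * Real.cos θ + r| = 0) := by
  have hM := logMahlerMeasure_X_sq_add_C_mul_X_add_one hr
  simp only [logMahlerMeasure_def, circleAverage_def, eval_circleMap_X_sq_add_C_mul_X_add_one,
    smul_eq_mul, mul_eq_zero, inv_eq_zero, Real.two_pi_pos.ne', false_or] at hM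
  exact ⟨hM, by simpa only [norm_exp_two_mul_I_add_mul_exp_add_one] using hM⟩
end

section
/- For real v with 1 < v < √2, the following equality of elliptic integrals holds: ∫_{3−2v²}^{1} dT / √((1 − T²)(T + 2v² − 1)(T + 2v² − 3)) = ∫_{(√(2−v²)−v²+1)/v}^{1} dt / √((1 − t²)(v² t² + 2(v² − 1)v t + v⁴ − v² − 1)). -/
/-!
The substitution `T = (2v²t² + 2vt + 1 - v²) / (2vt + v² + 1)` has derivative
`4v²(t + v)(vt + 1) / (2vt + v² + 1)²`, which is positive wherever `vt + 1 > 0` (given `v ≥ 1`),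
and it turns the quartic `(1 - T²)(T + 2v² - 1)(T + 2v² - 3)` into the square of that derivative
times the quartic in `t`. It fixes `1` and sends `(√(2 - v²) - v² + 1) / v` to `3 - 2v²`, so the
change of variables for monotone substitutions, which needs no integrability of the (endpoint
singular) integrands, carries one integral onto the other.
-/

open Real intervalIntegral

lemma mul_one_div_sqrt_sq_mul {c : ℝ} (hc : 0 < c) (q : ℝ) :
    c * (1 / √(c ^ 2 * q)) = 1 / √q := by
  rw [sqrt_mul (sq_nonneg c), sqrt_sq hc.le, one_div, mul_inv, ← mul_assoc,
    mul_inv_cancel₀ hc.ne', one_mul, one_div]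

noncomputable def ellipticSubst (v t : ℝ) : ℝ :=
  (2 * v ^ 2 * t ^ 2 + 2 * v * t + 1 - v ^ 2) / (2 * v * t + v ^ 2 + 1)

noncomputable def ellipticSubstDeriv (v t : ℝ) : ℝ :=
  4 * v ^ 2 * (t + v) * (v * t + 1) / (2 * v * t + v ^ 2 + 1) ^ 2

section

variable {v t : ℝ}

lemma hasDerivAt_ellipticSubst (hD : 2 * v * t + v ^ 2 + 1 ≠ 0) :
    HasDerivAt (ellipticSubst v) (ellipticSubstDeriv v t) t := by
  have hnum : HasDerivAt (fun x ↦ 2 * v ^ 2 * x ^ 2 + 2 * v * x + 1 - v ^ 2)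
      (2 * v ^ 2 * (2 * t) + 2 * v) t := by
    simpa using (((hasDerivAt_pow 2 t).const_mul (2 * v ^ 2)).add
      ((hasDerivAt_id t).const_mul (2 * v))).add_const (1 - v ^ 2)
  have hden : HasDerivAt (fun x ↦ 2 * v * x + v ^ 2 + 1) (2 * v) t := by
    simpa using ((hasDerivAt_id t).const_mul (2 * v)).add_const (v ^ 2 + 1)
  refine (hnum.div hden hD).congr_deriv ?_
  unfold ellipticSubstDeriv
  field_simp
  ring

lemma ellipticSubst_denom_pos (hv : 1 ≤ v) (ht : 0 < v * t + 1) :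
    0 < 2 * v * t + v ^ 2 + 1 := by
  nlinarith

lemma ellipticSubstDeriv_pos (hv : 1 ≤ v) (ht : 0 < v * t + 1) :
    0 < ellipticSubstDeriv v t := by
  have htv : 0 < t + v := by nlinarith
  unfold ellipticSubstDeriv
  have := ellipticSubst_denom_pos hv ht
  positivity

lemma ellipticSubst_one (hv : v ≠ -1) : ellipticSubst v 1 = 1 := by
  have : 2 * v * 1 + v ^ 2 + 1 ≠ 0 := by
    rw [show 2 * v * 1 + v ^ 2 + 1 = (v + 1) ^ 2 by ring]
    exact pow_ne_zero 2 (by contrapose! hv; linarith)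
  rw [ellipticSubst, div_eq_one_iff_eq this]
  ring

lemma ellipticSubst_lowerEndpoint (hv : v ≠ 0) (hv2 : v ^ 2 ≤ 2) :
    ellipticSubst v ((√(2 - v ^ 2) - v ^ 2 + 1) / v) = 3 - 2 * v ^ 2 := by
  set w := √(2 - v ^ 2)
  have hw2 : w ^ 2 = 2 - v ^ 2 := sq_sqrt (by linarith)
  have hD : 2 * v * ((w - v ^ 2 + 1) / v) + v ^ 2 + 1 = (w + 1) ^ 2 := by
    field_simp
    linear_combination -hw2
  rw [ellipticSubst, hD, div_eq_iff (by positivity)]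
  field_simp
  linear_combination (2 * v ^ 2 - 1) * hw2

lemma quartic_comp_ellipticSubst (hD : 2 * v * t + v ^ 2 + 1 ≠ 0) :
    (1 - ellipticSubst v t ^ 2) * (ellipticSubst v t + 2 * v ^ 2 - 1) *
        (ellipticSubst v t + 2 * v ^ 2 - 3) =
      ellipticSubstDeriv v t ^ 2 *
        ((1 - t ^ 2) * (v ^ 2 * t ^ 2 + 2 * (v ^ 2 - 1) * v * t + v ^ 4 - v ^ 2 - 1)) := by
  have hD' : v * (2 * t + v) + 1 ≠ 0 := by contrapose! hD; linear_combination hD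
  unfold ellipticSubst ellipticSubstDeriv
  field_simp
  ring

end

/-- Lemma 6 (`lem-EI1`): for real `v` with `1 < v < √2`,
`∫_{3−2v²}^{1} dT/√((1−T²)(T+2v²−1)(T+2v²−3))
  = ∫_{(√(2−v²)−v²+1)/v}^{1} dt/√((1−t²)(v²t²+2(v²−1)vt+v⁴−v²−1))`. -/
theorem elliptic_integral_identity (v : ℝ) (hv1 : 1 < v) (hv2 : v < Real.sqrt 2) :
    (∫ T in (3 - 2 * v ^ 2)..(1:ℝ),
        1 / Real.sqrt ((1 - T ^ 2) * (T + 2 * v ^ 2 - 1) * (T + 2 * v ^ 2 - 3))) =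
    ∫ t in ((Real.sqrt (2 - v ^ 2) - v ^ 2 + 1) / v)..(1:ℝ),
        1 / Real.sqrt ((1 - t ^ 2) *
          (v ^ 2 * t ^ 2 + 2 * (v ^ 2 - 1) * v * t + v ^ 4 - v ^ 2 - 1)) := by
  have hv0 : 0 < v := by linarith
  have hv_sq : v ^ 2 < 2 := by simpa using (lt_sqrt hv0.le).mp hv2
  set r := (√(2 - v ^ 2) - v ^ 2 + 1) / v with hr
  have hr_pos : 0 < v * r + 1 := by
    rw [hr, mul_div_cancel₀ _ hv0.ne']
    linarith [sqrt_nonneg (2 - v ^ 2)]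
  have hpos : ∀ t ∈ Set.uIcc r 1, 0 < v * t + 1 := by
    intro t ht
    rcases Set.mem_uIcc.mp ht with ⟨hrt, -⟩ | ⟨h1t, -⟩ <;> nlinarith
  have hderiv : ∀ t ∈ Set.uIcc r 1, HasDerivAt (ellipticSubst v) (ellipticSubstDeriv v t) t :=
    fun t ht ↦ hasDerivAt_ellipticSubst (ellipticSubst_denom_pos hv1.le (hpos t ht)).ne'
  have hsubst := integral_deriv_smul_comp_of_deriv_nonneg
    (g := fun T ↦ 1 / √((1 - T ^ 2) * (T + 2 * v ^ 2 - 1) * (T + 2 * v ^ 2 - 3)))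
    (fun t ht ↦ (hderiv t ht).continuousAt.continuousWithinAt)
    (fun t ht ↦ hderiv t (Set.Ioo_subset_Icc_self ht))
    (fun t ht ↦ (ellipticSubstDeriv_pos hv1.le (hpos t (Set.Ioo_subset_Icc_self ht))).le)
  rw [ellipticSubst_lowerEndpoint hv0.ne' hv_sq.le, ellipticSubst_one (by linarith)] at hsubst
  rw [← hsubst]
  refine integral_congr fun t ht ↦ ?_
  simp only [Function.comp_apply, smul_eq_mul]
  rw [quartic_comp_ellipticSubst (ellipticSubst_denom_pos hv1.le (hpos t ht)).ne',
    mul_one_div_sqrt_sq_mul (ellipticSubstDeriv_pos hv1.le (hpos t ht))]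
end

section
/- For real v with 1 < v < √2, one has v · ∫_{(√(2−v²)−v²+1)/v}^{1} (2t + v) dt / √((1 − t²)(v² t² + 2(v² − 1)v t + v⁴ − v² − 1)) = 3π/2. -/
/-!
The integrand is pseudo-elliptic. With `P` the radicand, `c = (v² - 1)³`,
`B = (vt - (2 - v²))(vt - 1)` and `A = c - 2(vt - 1)² Q`, where `Q` is the quadratic factor
of `P`, one has `c + A = 2v²(1 - t²)(vt - (2 - v²))²`, hence the polynomial Pell equation
`A² + 4v²B²P = c²`, and `A' = -4v²(2t + v)B`. So `arccos (A / c) / (2v)` is an antiderivative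
of `(2t + v)/√P` where `B > 0`, and of its negative where `B < 0`. The zeros `(2 - v²)/v` and
`1/v` of `B` cut the interval of integration into three pieces, on each of which `A / c` runs
from `1` to `-1` or back, so each piece contributes `π/(2v)`.
-/

open Real intervalIntegral Set MeasureTheory

theorem hasDerivAt_arccos_div_of_pell {A B P g : ℝ → ℝ} {k c t : ℝ} (hk : 0 < k)
    (hc : 0 < c) (hA : HasDerivAt A (-(k ^ 2 * g t * B t)) t)
    (hpell : A t ^ 2 + k ^ 2 * B t ^ 2 * P t = c ^ 2) (hP : 0 < P t) (hB : 0 < B t) :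
    HasDerivAt (fun t => arccos (A t / c) / k) (g t / √(P t)) t := by
  have hlt : (A t / c) ^ 2 < 1 := by
    have : 0 < k ^ 2 * B t ^ 2 * P t := by positivity
    rw [div_pow, div_lt_one (by positivity)]
    linarith
  obtain ⟨h1, h2⟩ := abs_lt.1 (sq_lt_one_iff_abs_lt_one _ |>.1 hlt)
  have hsqrt : √(1 - (A t / c) ^ 2) = k * B t * √(P t) / c := by
    rw [show 1 - (A t / c) ^ 2 = (k * B t / c) ^ 2 * P t by
          field_simp; linear_combination -hpell,
      sqrt_mul (sq_nonneg _), sqrt_sq (by positivity)]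
    ring
  refine (((hasDerivAt_arccos h1.ne' h2.ne).comp t (hA.div_const c)).div_const k).congr_deriv ?_
  rw [hsqrt]
  field_simp

theorem intervalIntegrable_and_integral_div_sqrt_of_pell {A B P g : ℝ → ℝ} {k c l r : ℝ}
    (hk : 0 < k) (hc : 0 < c) (hlr : l ≤ r)
    (hA : ∀ t, HasDerivAt A (-(k ^ 2 * g t * B t)) t)
    (hpell : ∀ t, A t ^ 2 + k ^ 2 * B t ^ 2 * P t = c ^ 2)
    (hP : ∀ t ∈ Ioo l r, 0 < P t) (hB : ∀ t ∈ Ioo l r, 0 < B t)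
    (hg : ∀ t ∈ Ioo l r, 0 ≤ g t) (hAl : A l = c) (hAr : A r = -c) :
    IntervalIntegrable (fun t => g t / √(P t)) volume l r ∧
      ∫ t in l..r, g t / √(P t) = π / k := by
  have hderiv : ∀ t ∈ Ioo l r, HasDerivAt (fun t => arccos (A t / c) / k) (g t / √(P t)) t :=
    fun t ht => hasDerivAt_arccos_div_of_pell hk hc (hA t) (hpell t) (hP t ht) (hB t ht)
  have hcont : ContinuousOn (fun t => arccos (A t / c) / k) (Icc l r) :=
    ((continuous_arccos.comp ((continuous_iff_continuousAt.2
      fun t => (hA t).continuousAt).div_const c)).div_const k).continuousOn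
  have hint : IntervalIntegrable (fun t => g t / √(P t)) volume l r :=
    (intervalIntegrable_iff_integrableOn_Ioc_of_le hlr).2 <| integrableOn_deriv_of_nonneg hcont
      hderiv fun t ht => div_nonneg (hg t ht) (sqrt_nonneg _)
  refine ⟨hint, ?_⟩
  rw [integral_eq_sub_of_hasDerivAt_of_le hlr hcont hderiv hint, hAl, hAr, neg_div,
    div_self hc.ne', arccos_neg_one, arccos_one]
  ring

namespace EllipticIntegral

variable {v : ℝ}

def quadFactor (v t : ℝ) : ℝ := v ^ 2 * t ^ 2 + 2 * (v ^ 2 - 1) * v * t + v ^ 4 - v ^ 2 - 1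

def radicand (v t : ℝ) : ℝ := (1 - t ^ 2) * quadFactor v t

noncomputable def lowerLimit (v : ℝ) : ℝ := (√(2 - v ^ 2) - v ^ 2 + 1) / v

def pellA (v t : ℝ) : ℝ := (v ^ 2 - 1) ^ 3 - 2 * (v * t - 1) ^ 2 * quadFactor v t

def pellB (v t : ℝ) : ℝ := (v * t - (2 - v ^ 2)) * (v * t - 1)

theorem quadFactor_eq_sq_sub (v t : ℝ) :
    quadFactor v t = (v * t + v ^ 2 - 1) ^ 2 - (2 - v ^ 2) := by
  unfold quadFactor; ring

theorem pellA_add_cube (v t : ℝ) :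
    pellA v t + (v ^ 2 - 1) ^ 3 = 2 * v ^ 2 * (1 - t ^ 2) * (v * t - (2 - v ^ 2)) ^ 2 := by
  unfold pellA quadFactor; ring

theorem pellA_sq_add_pellB_sq_mul_radicand (v t : ℝ) :
    pellA v t ^ 2 + (2 * v) ^ 2 * pellB v t ^ 2 * radicand v t = ((v ^ 2 - 1) ^ 3) ^ 2 := by
  unfold pellA pellB radicand quadFactor; ring

theorem hasDerivAt_pellA (v t : ℝ) :
    HasDerivAt (pellA v) (-((2 * v) ^ 2 * (2 * t + v) * pellB v t)) t := by
  have hlin : ∀ b, HasDerivAt (fun t => v * t + b) v t := fun b => by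
    simpa using ((hasDerivAt_id t).const_mul v).add_const b
  have hQ : HasDerivAt (quadFactor v) (2 * v * (v * t + v ^ 2 - 1)) t := by
    rw [show quadFactor v = fun t => (v * t + (v ^ 2 - 1)) ^ 2 - (2 - v ^ 2) from
      funext fun t => by rw [quadFactor_eq_sq_sub]; ring]
    exact (((hlin _).fun_pow 2).sub_const _).congr_deriv (by ring)
  rw [show pellA v = fun t => (v ^ 2 - 1) ^ 3 - 2 * ((v * t + -1) ^ 2 * quadFactor v t) from
    funext fun t => by unfold pellA; ring]
  exact (((((hlin _).fun_pow 2).mul hQ).const_mul 2).const_sub _).congr_deriv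
    (by unfold pellB quadFactor; ring)

theorem quadFactor_lowerLimit (hv : 0 < v) (hv2 : v ^ 2 ≤ 2) :
    quadFactor v (lowerLimit v) = 0 := by
  rw [quadFactor_eq_sq_sub, lowerLimit, mul_div_cancel₀ _ hv.ne']
  linear_combination sq_sqrt (sub_nonneg.2 hv2)

theorem quadFactor_pos (hv : 0 < v) (hv2 : v ^ 2 ≤ 2) {t : ℝ} (ht : lowerLimit v < t) :
    0 < quadFactor v t := by
  have hs := sqrt_nonneg (2 - v ^ 2)
  have : √(2 - v ^ 2) < v * t + v ^ 2 - 1 := by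
    rw [lowerLimit, div_lt_iff₀ hv] at ht; linarith
  rw [quadFactor_eq_sq_sub, ← sq_sqrt (sub_nonneg.2 hv2), sub_pos]
  exact pow_lt_pow_left₀ this hs two_ne_zero

theorem pellA_lowerLimit (hv : 0 < v) (hv2 : v ^ 2 ≤ 2) :
    pellA v (lowerLimit v) = (v ^ 2 - 1) ^ 3 := by
  simp [pellA, quadFactor_lowerLimit hv hv2]

theorem pellA_inv (hv : v ≠ 0) : pellA v v⁻¹ = (v ^ 2 - 1) ^ 3 := by
  simp [pellA, mul_inv_cancel₀ hv]

theorem pellA_two_sub_sq_div (hv : v ≠ 0) : pellA v ((2 - v ^ 2) / v) = -(v ^ 2 - 1) ^ 3 := by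
  have := pellA_add_cube v ((2 - v ^ 2) / v)
  rw [mul_div_cancel₀ _ hv, sub_self] at this
  linear_combination this

theorem pellA_one (v : ℝ) : pellA v 1 = -(v ^ 2 - 1) ^ 3 := by
  linear_combination pellA_add_cube v 1

theorem neg_one_lt_lowerLimit (hv : 1 < v) (hv2 : v ^ 2 < 2) : -1 < lowerLimit v := by
  rw [lowerLimit, lt_div_iff₀ (by linarith)]
  nlinarith [sqrt_nonneg (2 - v ^ 2)]

theorem lowerLimit_lt (hv : 1 < v) : lowerLimit v < (2 - v ^ 2) / v := by
  have : √(2 - v ^ 2) < 1 := by rw [sqrt_lt' one_pos]; nlinarith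
  rw [lowerLimit, div_lt_div_iff_of_pos_right (by linarith)]
  linarith

theorem pellB_pos_of_lt (hv : 1 < v) {t : ℝ} (ht : t < (2 - v ^ 2) / v) : 0 < pellB v t := by
  rw [lt_div_iff₀ (by linarith)] at ht
  exact mul_pos_of_neg_of_neg (by linarith) (by nlinarith)

theorem pellB_neg_of_mem_Ioo (hv : 0 < v) {t : ℝ} (ht : t ∈ Ioo ((2 - v ^ 2) / v) v⁻¹) :
    pellB v t < 0 := by
  have h1 := (div_lt_iff₀ hv).1 ht.1
  have h2 := (mul_lt_mul_iff_right₀ hv).2 ht.2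
  rw [mul_inv_cancel₀ hv.ne'] at h2
  exact mul_neg_of_pos_of_neg (by linarith) (by linarith)

theorem pellB_pos_of_inv_lt (hv : 1 < v) {t : ℝ} (ht : v⁻¹ < t) : 0 < pellB v t := by
  rw [inv_lt_iff_one_lt_mul₀' (by linarith)] at ht
  exact mul_pos (by nlinarith) (by linarith)

theorem radicand_pos (hv : 1 < v) (hv2 : v ^ 2 < 2) {t : ℝ} (hat : lowerLimit v < t)
    (ht : t < 1) :
    0 < radicand v t := by
  have := neg_one_lt_lowerLimit hv hv2
  exact mul_pos (by nlinarith) (quadFactor_pos (by linarith) hv2.le hat)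

theorem intervalIntegrable_and_integral_radicand_of_pell (hv : 1 < v) (hv2 : v ^ 2 < 2)
    {A B : ℝ → ℝ} {l r : ℝ} (hlr : l ≤ r) (hl : lowerLimit v ≤ l) (hr : r ≤ 1)
    (hA : ∀ t, HasDerivAt A (-((2 * v) ^ 2 * (2 * t + v) * B t)) t)
    (hpell : ∀ t, A t ^ 2 + (2 * v) ^ 2 * B t ^ 2 * radicand v t = ((v ^ 2 - 1) ^ 3) ^ 2)
    (hB : ∀ t ∈ Ioo l r, 0 < B t) (hAl : A l = (v ^ 2 - 1) ^ 3)
    (hAr : A r = -(v ^ 2 - 1) ^ 3) :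
    IntervalIntegrable (fun t => (2 * t + v) / √(radicand v t)) volume l r ∧
      ∫ t in l..r, (2 * t + v) / √(radicand v t) = π / (2 * v) := by
  have hv1 : 1 < v ^ 2 := by nlinarith
  have h2a : 0 ≤ 2 * lowerLimit v + v := by
    have : 2 * lowerLimit v + v = (2 * √(2 - v ^ 2) + (2 - v ^ 2)) / v := by
      rw [lowerLimit]; field_simp; ring
    rw [this]
    exact div_nonneg (by linarith [sqrt_nonneg (2 - v ^ 2)]) (by linarith)
  refine intervalIntegrable_and_integral_div_sqrt_of_pell (by positivity) (by positivity) hlr hA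
    hpell (fun t ht => radicand_pos hv hv2 (hl.trans_lt ht.1) (ht.2.trans_le hr)) hB
    (fun t ht => by linarith [ht.1]) hAl hAr

end EllipticIntegral

open EllipticIntegral

/-- Lemma 7 (`lem-EI2`): for real `v` with `1 < v < √2`,
`v ∫_{(√(2−v²)−v²+1)/v}^{1} (2t+v) dt/√((1−t²)(v²t²+2(v²−1)vt+v⁴−v²−1)) = 3π/2`. -/
theorem elliptic_integral_eval (v : ℝ) (hv1 : 1 < v) (hv2 : v < Real.sqrt 2) :
    v * ∫ t in ((Real.sqrt (2 - v ^ 2) - v ^ 2 + 1) / v)..(1:ℝ),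
        (2 * t + v) / Real.sqrt ((1 - t ^ 2) *
          (v ^ 2 * t ^ 2 + 2 * (v ^ 2 - 1) * v * t + v ^ 4 - v ^ 2 - 1)) =
      3 * π / 2 := by
  have hv0 : 0 < v := by linarith
  have hsq : v ^ 2 < 2 := by simpa using (lt_sqrt hv0.le).1 hv2
  have hap := lowerLimit_lt hv1
  have hpq : (2 - v ^ 2) / v < v⁻¹ := by
    rw [div_lt_iff₀ hv0, inv_mul_cancel₀ hv0.ne']; nlinarith
  have hq1 : v⁻¹ < 1 := inv_lt_one_of_one_lt₀ hv1
  obtain ⟨i1, e1⟩ := intervalIntegrable_and_integral_radicand_of_pell hv1 hsq hap.le le_rfl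
    (hpq.trans hq1).le (hasDerivAt_pellA v) (pellA_sq_add_pellB_sq_mul_radicand v)
    (fun t ht => pellB_pos_of_lt hv1 ht.2) (pellA_lowerLimit hv0 hsq.le)
    (pellA_two_sub_sq_div hv0.ne')
  obtain ⟨i2, e2⟩ := intervalIntegrable_and_integral_radicand_of_pell (A := fun t => -pellA v t)
    (B := fun t => -pellB v t) hv1 hsq hpq.le hap.le hq1.le
    (fun t => (hasDerivAt_pellA v t).neg.congr_deriv (by ring))
    (fun t => by linear_combination pellA_sq_add_pellB_sq_mul_radicand v t)
    (fun t ht => neg_pos.2 (pellB_neg_of_mem_Ioo hv0 ht))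
    (by rw [pellA_two_sub_sq_div hv0.ne', neg_neg]) (by rw [pellA_inv hv0.ne'])
  obtain ⟨i3, e3⟩ := intervalIntegrable_and_integral_radicand_of_pell hv1 hsq hq1.le
    (hap.trans hpq).le le_rfl (hasDerivAt_pellA v) (pellA_sq_add_pellB_sq_mul_radicand v)
    (fun t ht => pellB_pos_of_inv_lt hv1 ht.1) (pellA_inv hv0.ne') (pellA_one v)
  show v * ∫ t in lowerLimit v..1, (2 * t + v) / √(radicand v t) = 3 * π / 2
  rw [← integral_add_adjacent_intervals i1 (i2.trans i3),
    ← integral_add_adjacent_intervals i2 i3, e1, e2, e3]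
  field_simp
  ring
end

section
/- Let u > √2 + 1 be real and set t₋ = −(u⁴ + 2u³ − 6u − 1)/((u² + 1)(u² + 2u − 1)) and t₊ = (u⁴ − 6u³ + 2u − 1)/((u² + 1)(u² + 2u − 1)), so that −1 ≤ t₋ < t₊ < 1. Then (4/π) ∫_{t₊}^{1} t dt / √((1 − t²)(t − t₋)(t − t₊)) − (4/π) ∫_{−1}^{t₋} t dt / √((1 − t²)(t − t₋)(t − t₊)) = 4. -/
/-!
Write `s = t₋ + t₊` and `p = t₋ t₊`. The degree-two map
`V(t) = (1 - t²) / ((1 - t²) + (t - t₋)(t - t₊))` sends `±1` to `0` and `t₋, t₊` to `1`. Its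
fibre over `v` is the root pair of `x² - v s x + v (1 + p) - 1`, and for `0 < v < 1` it has one
point on each of the arcs `(-1, t₋)` and `(t₊, 1)`. Pulling both integrals back along `V` turns
them into integrals over `(0, 1)` of `x(v) / (Δ(v) √(v (1 - v)))`, where `x` is the upper, resp.
lower, point of the fibre and `Δ` is the distance between the two. The difference of the two
integrands is therefore `1 / √(v (1 - v))`, whose integral over `(0, 1)` is `π`.
-/

open Real Set MeasureTheory

lemma hasDerivAt_arcsin_two_mul_sub_one {v : ℝ} (hv : v ∈ Ioo 0 1) :
    HasDerivAt (fun v => arcsin (2 * v - 1)) (1 / √(v * (1 - v))) v := by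
  have hlin : HasDerivAt (fun v : ℝ => 2 * v - 1) 2 v := by
    simpa using ((hasDerivAt_id v).const_mul 2).sub_const 1
  have h := (hasDerivAt_arcsin (by linarith [hv.1]) (by linarith [hv.2])).comp v hlin
  refine h.congr_deriv ?_
  rw [show 1 - (2 * v - 1) ^ 2 = 2 ^ 2 * (v * (1 - v)) by ring, sqrt_mul (by positivity),
    sqrt_sq zero_le_two]
  field_simp

lemma integrableOn_one_div_sqrt_mul_one_sub :
    IntegrableOn (fun v : ℝ => 1 / √(v * (1 - v))) (Ioc 0 1) :=
  intervalIntegral.integrableOn_deriv_of_nonneg (by fun_prop)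
    (fun _ hv => hasDerivAt_arcsin_two_mul_sub_one hv) fun _ _ => by positivity

lemma integral_one_div_sqrt_mul_one_sub : ∫ v in (0 : ℝ)..1, 1 / √(v * (1 - v)) = π := by
  rw [intervalIntegral.integral_eq_sub_of_hasDerivAt_of_le zero_le_one (by fun_prop)
    (fun _ hv => hasDerivAt_arcsin_two_mul_sub_one hv)
    ((intervalIntegrable_iff_integrableOn_Ioc_of_le zero_le_one).2
      integrableOn_one_div_sqrt_mul_one_sub)]
  norm_num

noncomputable def foldDenom (tm tp t : ℝ) : ℝ := 1 + tm * tp - (tm + tp) * t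

noncomputable def foldMap (tm tp t : ℝ) : ℝ := (1 - t ^ 2) / foldDenom tm tp t

-- the distance between the two points of the fibre of `foldMap tm tp` over `v`, which are the roots
-- of `x ^ 2 - v * (tm + tp) * x + v * (1 + tm * tp) - 1`
noncomputable def fiberGap (tm tp v : ℝ) : ℝ :=
  √((v * (tm + tp)) ^ 2 - 4 * v * (1 + tm * tp) + 4)

noncomputable def fiberUpper (tm tp v : ℝ) : ℝ := (v * (tm + tp) + fiberGap tm tp v) / 2

noncomputable def fiberLower (tm tp v : ℝ) : ℝ := (v * (tm + tp) - fiberGap tm tp v) / 2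

def arcs (tm tp : ℝ) : Set ℝ := {t | 0 < 1 - t ^ 2 ∧ 0 < (t - tm) * (t - tp)}

section

variable {tm tp t v : ℝ}

lemma foldDenom_eq : foldDenom tm tp t = (1 - t ^ 2) + (t - tm) * (t - tp) := by
  unfold foldDenom; ring

lemma foldDenom_pos_of_mem_arcs (ht : t ∈ arcs tm tp) : 0 < foldDenom tm tp t := by
  rw [foldDenom_eq]; exact add_pos ht.1 ht.2

lemma foldDenom_pos (h1 : -1 < tm) (h2 : tm < tp) (h3 : tp < 1) (ht : t ∈ Icc (-1) 1) :
    0 < foldDenom tm tp t := by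
  obtain ⟨ht1, ht2⟩ := ht
  have e : 2 * foldDenom tm tp t =
      (1 + t) * ((1 - tm) * (1 - tp)) + (1 - t) * ((1 + tm) * (1 + tp)) := by
    unfold foldDenom; ring
  have hP : 0 < (1 - tm) * (1 - tp) := mul_pos (by linarith) (by linarith)
  have hQ : 0 < (1 + tm) * (1 + tp) := mul_pos (by linarith) (by linarith)
  rcases le_total t 0 with ht | ht
  · nlinarith [mul_nonneg (by linarith : (0:ℝ) ≤ 1 + t) hP.le,
      mul_nonneg (by linarith : (0:ℝ) ≤ -t) hQ.le]
  · nlinarith [mul_nonneg (by linarith : (0:ℝ) ≤ 1 - t) hQ.le, mul_nonneg ht hP.le]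

lemma Ioo_right_subset_arcs (h1 : -1 < tm) (h2 : tm < tp) : Ioo tp 1 ⊆ arcs tm tp :=
  fun t ⟨htp, ht1⟩ => ⟨by nlinarith, mul_pos (by linarith) (by linarith)⟩

lemma Ioo_left_subset_arcs (h2 : tm < tp) (h3 : tp < 1) : Ioo (-1) tm ⊆ arcs tm tp :=
  fun t ⟨ht1, htm⟩ => ⟨by nlinarith, mul_pos_of_neg_of_neg (by linarith) (by linarith)⟩

lemma foldMap_mem_Ioo (ht : t ∈ arcs tm tp) : foldMap tm tp t ∈ Ioo 0 1 := by
  have hq := foldDenom_pos_of_mem_arcs ht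
  refine ⟨div_pos ht.1 hq, (div_lt_one hq).2 ?_⟩
  rw [foldDenom_eq]; linarith [ht.2]

lemma sqrt_quartic_eq (ht : t ∈ arcs tm tp) :
    √((1 - t ^ 2) * (t - tm) * (t - tp)) =
      foldDenom tm tp t * √(foldMap tm tp t * (1 - foldMap tm tp t)) := by
  have hq := foldDenom_pos_of_mem_arcs ht
  have h : foldMap tm tp t * (1 - foldMap tm tp t) =
      (1 - t ^ 2) * (t - tm) * (t - tp) / foldDenom tm tp t ^ 2 := by
    rw [foldMap]
    rw [foldDenom_eq] at hq ⊢
    field_simp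
    ring
  rw [h, sqrt_div' _ (sq_nonneg _), sqrt_sq hq.le, mul_div_cancel₀ _ hq.ne']

lemma foldMap_mul_foldDenom (hq : foldDenom tm tp t ≠ 0) :
    foldMap tm tp t * foldDenom tm tp t = 1 - t ^ 2 :=
  div_mul_cancel₀ _ hq

lemma hasDerivAt_foldMap (hq : foldDenom tm tp t ≠ 0) :
    HasDerivAt (foldMap tm tp) ((foldMap tm tp t * (tm + tp) - 2 * t) / foldDenom tm tp t) t := by
  have hden : HasDerivAt (foldDenom tm tp) (-(tm + tp)) t := by
    have := ((hasDerivAt_id t).const_mul (tm + tp)).const_sub (1 + tm * tp)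
    rwa [mul_one] at this
  refine (((hasDerivAt_pow 2 t).const_sub 1).div hden hq).congr_deriv ?_
  rw [foldMap]
  field_simp
  unfold foldDenom
  ring

lemma fiberGap_foldMap (hq : foldDenom tm tp t ≠ 0) :
    fiberGap tm tp (foldMap tm tp t) = |2 * t - foldMap tm tp t * (tm + tp)| := by
  rw [fiberGap, ← sqrt_sq_eq_abs]
  have h := foldMap_mul_foldDenom hq
  unfold foldDenom at h
  congr 1
  linear_combination (-4) * h

lemma foldMap_mul_lt_two_mul (h1 : -1 < tm) (h2 : tm < tp) (ht : t ∈ Ioo tp 1) :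
    foldMap tm tp t * (tm + tp) < 2 * t := by
  have harc := Ioo_right_subset_arcs h1 h2 ht
  have h := foldMap_mul_foldDenom (foldDenom_pos_of_mem_arcs harc).ne'
  unfold foldDenom at h
  -- `tp` lies strictly between the two fibre points `t` and `foldMap tm tp t * (tm + tp) - t`
  have hsep : (t - tp) * (t + tp - foldMap tm tp t * (tm + tp)) =
      (1 - tp ^ 2) * (1 - foldMap tm tp t) := by
    linear_combination h
  have hpos : 0 < (1 - tp ^ 2) * (1 - foldMap tm tp t) :=
    mul_pos (by nlinarith [ht.1, ht.2]) (by linarith [(foldMap_mem_Ioo harc).2])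
  nlinarith [ht.1]

lemma two_mul_lt_foldMap_mul (h2 : tm < tp) (h3 : tp < 1) (ht : t ∈ Ioo (-1) tm) :
    2 * t < foldMap tm tp t * (tm + tp) := by
  have harc := Ioo_left_subset_arcs h2 h3 ht
  have h := foldMap_mul_foldDenom (foldDenom_pos_of_mem_arcs harc).ne'
  unfold foldDenom at h
  have hsep : (t - tm) * (t + tm - foldMap tm tp t * (tm + tp)) =
      (1 - tm ^ 2) * (1 - foldMap tm tp t) := by
    linear_combination h
  have hpos : 0 < (1 - tm ^ 2) * (1 - foldMap tm tp t) :=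
    mul_pos (by nlinarith [ht.1, ht.2]) (by linarith [(foldMap_mem_Ioo harc).2])
  nlinarith [ht.2]

lemma leftInvOn_fiberUpper_foldMap (h1 : -1 < tm) (h2 : tm < tp) :
    LeftInvOn (fiberUpper tm tp) (foldMap tm tp) (Ioo tp 1) := fun t ht => by
  rw [fiberUpper,
    fiberGap_foldMap (foldDenom_pos_of_mem_arcs (Ioo_right_subset_arcs h1 h2 ht)).ne',
    abs_of_pos (sub_pos.2 (foldMap_mul_lt_two_mul h1 h2 ht))]
  ring

lemma leftInvOn_fiberLower_foldMap (h2 : tm < tp) (h3 : tp < 1) :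
    LeftInvOn (fiberLower tm tp) (foldMap tm tp) (Ioo (-1) tm) := fun t ht => by
  rw [fiberLower,
    fiberGap_foldMap (foldDenom_pos_of_mem_arcs (Ioo_left_subset_arcs h2 h3 ht)).ne',
    abs_of_neg (sub_neg.2 (two_mul_lt_foldMap_mul h2 h3 ht))]
  ring

lemma continuousOn_foldMap (h1 : -1 < tm) (h2 : tm < tp) (h3 : tp < 1) :
    ContinuousOn (foldMap tm tp) (Icc (-1) 1) := fun _ ht =>
  (hasDerivAt_foldMap (foldDenom_pos h1 h2 h3 ht).ne').continuousAt.continuousWithinAt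

lemma foldMap_one : foldMap tm tp 1 = 0 := by simp [foldMap]

lemma foldMap_neg_one : foldMap tm tp (-1) = 0 := by simp [foldMap]

lemma foldMap_left (h : tm ^ 2 ≠ 1) : foldMap tm tp tm = 1 := by
  rw [foldMap, foldDenom, show 1 + tm * tp - (tm + tp) * tm = 1 - tm ^ 2 by ring]
  exact div_self (sub_ne_zero.2 h.symm)

lemma foldMap_right (h : tp ^ 2 ≠ 1) : foldMap tm tp tp = 1 := by
  rw [foldMap, foldDenom, show 1 + tm * tp - (tm + tp) * tp = 1 - tp ^ 2 by ring]
  exact div_self (sub_ne_zero.2 h.symm)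

lemma image_foldMap_Ioo_right (h1 : -1 < tm) (h2 : tm < tp) (h3 : tp < 1) :
    foldMap tm tp '' Ioo tp 1 = Ioo 0 1 := by
  refine Subset.antisymm
    (image_subset_iff.2 fun t ht => foldMap_mem_Ioo (Ioo_right_subset_arcs h1 h2 ht)) ?_
  have := intermediate_value_Ioo' h3.le
    ((continuousOn_foldMap h1 h2 h3).mono (Icc_subset_Icc (by linarith) le_rfl))
  rwa [foldMap_one, foldMap_right (by nlinarith)] at this

lemma image_foldMap_Ioo_left (h1 : -1 < tm) (h2 : tm < tp) (h3 : tp < 1) :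
    foldMap tm tp '' Ioo (-1) tm = Ioo 0 1 := by
  refine Subset.antisymm
    (image_subset_iff.2 fun t ht => foldMap_mem_Ioo (Ioo_left_subset_arcs h2 h3 ht)) ?_
  have := intermediate_value_Ioo (by linarith : (-1 : ℝ) ≤ tm)
    ((continuousOn_foldMap h1 h2 h3).mono (Icc_subset_Icc le_rfl (by linarith)))
  rwa [foldMap_neg_one, foldMap_left (by nlinarith)] at this

lemma integral_image_foldMap {S : Set ℝ} (hS : MeasurableSet S) (hSarcs : S ⊆ arcs tm tp)
    {x : ℝ → ℝ} (hx : LeftInvOn x (foldMap tm tp) S)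
    (hgap : ∀ t ∈ S, foldMap tm tp t * (tm + tp) ≠ 2 * t) :
    ∫ v in foldMap tm tp '' S, x v / (fiberGap tm tp v * √(v * (1 - v))) =
      ∫ t in S, t / √((1 - t ^ 2) * (t - tm) * (t - tp)) := by
  have hq : ∀ t ∈ S, 0 < foldDenom tm tp t := fun t ht => foldDenom_pos_of_mem_arcs (hSarcs ht)
  rw [integral_image_eq_integral_abs_deriv_smul hS
    (fun t ht => (hasDerivAt_foldMap (hq t ht).ne').hasDerivWithinAt) hx.injOn]
  refine setIntegral_congr_fun hS fun t ht => ?_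
  have hd : 0 < |2 * t - foldMap tm tp t * (tm + tp)| :=
    abs_pos.2 (sub_ne_zero.2 (hgap t ht).symm)
  rw [smul_eq_mul, hx ht, fiberGap_foldMap (hq t ht).ne', sqrt_quartic_eq (hSarcs ht), abs_div,
    abs_of_pos (hq t ht), abs_sub_comm]
  field_simp

lemma fiberUpper_div_sub_fiberLower_div (hv : fiberGap tm tp v ≠ 0) (r : ℝ) :
    fiberUpper tm tp v / (fiberGap tm tp v * r) - fiberLower tm tp v / (fiberGap tm tp v * r) =
      1 / r := by
  rw [← sub_div, show fiberUpper tm tp v - fiberLower tm tp v = fiberGap tm tp v by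
    unfold fiberUpper fiberLower; ring, div_mul_cancel_left₀ hv, one_div]

@[fun_prop]
lemma continuous_fiberGap : Continuous (fiberGap tm tp) := by
  unfold fiberGap; fun_prop

lemma fiberGap_pos (h1 : -1 < tm) (h2 : tm < tp) (h3 : tp < 1) (hv : v ∈ Icc 0 1) :
    0 < fiberGap tm tp v := by
  obtain ⟨hv0, hv1⟩ := hv
  have hc : 0 < 4 * (1 + tm * tp) - (1 + v) * (tm + tp) ^ 2 := by
    nlinarith [sq_nonneg (tm + tp), sq_nonneg (tm - tp)]
  refine sqrt_pos.2 ?_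
  nlinarith [mul_nonneg (sub_nonneg.2 hv1) hc.le, sq_pos_of_pos (sub_pos.2 h2)]

lemma integrableOn_div_fiberGap_mul_sqrt (h1 : -1 < tm) (h2 : tm < tp) (h3 : tp < 1)
    {x : ℝ → ℝ} (hx : Continuous x) :
    IntegrableOn (fun v => x v / (fiberGap tm tp v * √(v * (1 - v)))) (Ioo 0 1) := by
  have hcont : ContinuousOn (fun v => x v / fiberGap tm tp v) (Icc 0 1) :=
    hx.continuousOn.div continuous_fiberGap.continuousOn fun v hv =>
      (fiberGap_pos h1 h2 h3 hv).ne'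
  refine ((integrableOn_one_div_sqrt_mul_one_sub.continuousOn_mul_of_subset hcont isCompact_Icc
    measurableSet_Ioc Ioc_subset_Icc_self).mono_set Ioo_subset_Ioc_self).congr_fun
    (fun v _ => div_mul_div_comm _ _ _ _ |>.trans (by rw [mul_one])) measurableSet_Ioo

theorem integral_sub_integral_eq_pi (h1 : -1 < tm) (h2 : tm < tp) (h3 : tp < 1) :
    (∫ t in tp..1, t / √((1 - t ^ 2) * (t - tm) * (t - tp))) -
      ∫ t in (-1)..tm, t / √((1 - t ^ 2) * (t - tm) * (t - tp)) = π := by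
  rw [intervalIntegral.integral_of_le h3.le, intervalIntegral.integral_of_le (by linarith),
    integral_Ioc_eq_integral_Ioo, integral_Ioc_eq_integral_Ioo,
    ← integral_image_foldMap measurableSet_Ioo (Ioo_right_subset_arcs h1 h2)
      (leftInvOn_fiberUpper_foldMap h1 h2) fun t ht => (foldMap_mul_lt_two_mul h1 h2 ht).ne,
    ← integral_image_foldMap measurableSet_Ioo (Ioo_left_subset_arcs h2 h3)
      (leftInvOn_fiberLower_foldMap h2 h3) fun t ht => (two_mul_lt_foldMap_mul h2 h3 ht).ne',
    image_foldMap_Ioo_right h1 h2 h3, image_foldMap_Ioo_left h1 h2 h3,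
    ← integral_sub (integrableOn_div_fiberGap_mul_sqrt h1 h2 h3 (by unfold fiberUpper; fun_prop))
      (integrableOn_div_fiberGap_mul_sqrt h1 h2 h3 (by unfold fiberLower; fun_prop)),
    ← integral_one_div_sqrt_mul_one_sub, intervalIntegral.integral_of_le zero_le_one,
    integral_Ioc_eq_integral_Ioo]
  exact setIntegral_congr_fun measurableSet_Ioo fun v hv =>
    fiberUpper_div_sub_fiberLower_div (fiberGap_pos h1 h2 h3 (Ioo_subset_Icc_self hv)).ne' _

end

lemma neg_one_lt_tm_lt_tp_lt_one {u tm tp : ℝ} (hu : √2 + 1 < u)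
    (htm : tm = -(u ^ 4 + 2 * u ^ 3 - 6 * u - 1) / ((u ^ 2 + 1) * (u ^ 2 + 2 * u - 1)))
    (htp : tp = (u ^ 4 - 6 * u ^ 3 + 2 * u - 1) / ((u ^ 2 + 1) * (u ^ 2 + 2 * u - 1))) :
    -1 < tm ∧ tm < tp ∧ tp < 1 := by
  have hu0 : 0 < u := by linarith [sqrt_nonneg 2]
  have hu2 : 0 < u ^ 2 - 2 * u - 1 := by
    nlinarith [sq_sqrt (zero_le_two : (0 : ℝ) ≤ 2), sqrt_nonneg 2]
  have hD : 0 < (u ^ 2 + 1) * (u ^ 2 + 2 * u - 1) := by nlinarith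
  subst htm htp
  refine ⟨?_, ?_, ?_⟩
  · rw [lt_div_iff₀ hD]; nlinarith
  · rw [div_lt_div_iff_of_pos_right hD]; nlinarith
  · rw [div_lt_one hD]; nlinarith

/-- Equation (eq2): for real `u > √2 + 1` with
`t₋ = −(u⁴+2u³−6u−1)/((u²+1)(u²+2u−1))` and `t₊ = (u⁴−6u³+2u−1)/((u²+1)(u²+2u−1))`,
one has `J₋ − J₊ = 4`. -/
theorem Jminus_sub_Jplus_eq_four (u tm tp : ℝ) (hu : Real.sqrt 2 + 1 < u)
    (htm : tm = -(u ^ 4 + 2 * u ^ 3 - 6 * u - 1) / ((u ^ 2 + 1) * (u ^ 2 + 2 * u - 1)))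
    (htp : tp = (u ^ 4 - 6 * u ^ 3 + 2 * u - 1) / ((u ^ 2 + 1) * (u ^ 2 + 2 * u - 1))) :
    (4 / π) * (∫ t in tp..(1:ℝ),
        t / Real.sqrt ((1 - t ^ 2) * (t - tm) * (t - tp))) -
    (4 / π) * (∫ t in (-1:ℝ)..tm,
        t / Real.sqrt ((1 - t ^ 2) * (t - tm) * (t - tp))) = 4 := by
  obtain ⟨h1, h2, h3⟩ := neg_one_lt_tm_lt_tp_lt_one hu htm htp
  rw [← mul_sub, integral_sub_integral_eq_pi h1 h2 h3, div_mul_cancel₀ 4 pi_ne_zero]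
end

section
/- Let u > √2 + 1 be real. Set k = 16u(u² − 1)/(u² + 1)², t₋ = −(u⁴ + 2u³ − 6u − 1)/((u² + 1)(u² + 2u − 1)), t₊ = (u⁴ − 6u³ + 2u − 1)/((u² + 1)(u² + 2u − 1)). Define K = (8/π) ∫_{1−k/2}^{1} dT / √((1 − T²)(T + k/2 − 1)(T + k/2 + 1)) and I = (4/π) ∫_{t₊}^{1} dt / √((1 − t²)(t − t₋)(t − t₊)). Then K = (2(u² + 1)/(u² + 2u − 1)) · I. -/
/-!
Write `A = u² + 1`, `B = u² + 2u - 1` and `D(t) = A² + B² + 2ABt`. The substitution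
`T = φ(t) = 1 + 2B²(t² - 1) / D(t)` has `φ' = 4B²(At + B)(Bt + A) / D²`, which is positive on
`[t₊, 1]` because `u > √2 + 1`, and it maps `t₊ ↦ 1 - k/2`, `1 ↦ 1`. Each factor of the
quartic under the first root is a rational function of `t`:
`1 - φ = 2B²(1 - t²) / D`, `1 + φ = 2(Bt + A)² / D`, `φ + k/2 - 1 = 2B²(t - t₋)(t - t₊) / D` and
`φ + k/2 + 1 = 2B²(At + B)² / (A²D)`, so that
`(1 - φ²)(φ + k/2 - 1)(φ + k/2 + 1) = ((B/A) φ')² (1 - t²)(t - t₋)(t - t₊)`.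
Hence `φ' / √(quartic in φ) = (A/B) / √(quartic in t)`, and changing variables gives `K = 2(A/B) I`.
-/

open Real intervalIntegral Set

lemma one_div_sqrt_sq_mul_mul {c d P : ℝ} (hc : 0 < c) (hd : 0 < d) :
    1 / √((c * d) ^ 2 * P) * d = c⁻¹ * (1 / √P) := by
  rw [sqrt_mul (sq_nonneg _), sqrt_sq (by positivity)]
  simp only [one_div, mul_inv]
  field_simp

noncomputable def quarticK (k T : ℝ) : ℝ := (1 - T ^ 2) * (T + k / 2 - 1) * (T + k / 2 + 1)

def quarticI (a b t : ℝ) : ℝ := (1 - t ^ 2) * (t - a) * (t - b)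

noncomputable def kParam (u : ℝ) : ℝ := 16 * u * (u ^ 2 - 1) / (u ^ 2 + 1) ^ 2

noncomputable def tMinus (u : ℝ) : ℝ :=
  -(u ^ 4 + 2 * u ^ 3 - 6 * u - 1) / ((u ^ 2 + 1) * (u ^ 2 + 2 * u - 1))

noncomputable def tPlus (u : ℝ) : ℝ :=
  (u ^ 4 - 6 * u ^ 3 + 2 * u - 1) / ((u ^ 2 + 1) * (u ^ 2 + 2 * u - 1))

def phiDen (u t : ℝ) : ℝ :=
  (u ^ 2 + 1) ^ 2 + (u ^ 2 + 2 * u - 1) ^ 2 + 2 * (u ^ 2 + 1) * (u ^ 2 + 2 * u - 1) * t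

noncomputable def phi (u t : ℝ) : ℝ := 1 + 2 * (u ^ 2 + 2 * u - 1) ^ 2 * (t ^ 2 - 1) / phiDen u t

noncomputable def phiDeriv (u t : ℝ) : ℝ :=
  4 * (u ^ 2 + 2 * u - 1) ^ 2 * ((u ^ 2 + 1) * t + (u ^ 2 + 2 * u - 1)) *
    ((u ^ 2 + 2 * u - 1) * t + (u ^ 2 + 1)) / phiDen u t ^ 2

section Substitution

variable {u t : ℝ}

lemma hasDerivAt_phi (ht : phiDen u t ≠ 0) : HasDerivAt (phi u) (phiDeriv u t) t := by
  have hden : HasDerivAt (phiDen u) (2 * (u ^ 2 + 1) * (u ^ 2 + 2 * u - 1)) t :=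
    (((hasDerivAt_id' t).const_mul _).const_add _).congr_deriv (mul_one _)
  have hnum : HasDerivAt (fun t ↦ 2 * (u ^ 2 + 2 * u - 1) ^ 2 * (t ^ 2 - 1))
      (2 * (u ^ 2 + 2 * u - 1) ^ 2 * (2 * t)) t := by
    simpa using ((hasDerivAt_pow 2 t).sub_const 1).const_mul (2 * (u ^ 2 + 2 * u - 1) ^ 2)
  refine ((hnum.div hden ht).const_add 1).congr_deriv ?_
  rw [phiDeriv, div_left_inj' (pow_ne_zero 2 ht), phiDen]
  ring

lemma phi_one : phi u 1 = 1 := by simp [phi]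

lemma mul_tPlus (hB : u ^ 2 + 2 * u - 1 ≠ 0) :
    (u ^ 2 + 1) * (u ^ 2 + 2 * u - 1) * tPlus u = u ^ 4 - 6 * u ^ 3 + 2 * u - 1 := by
  rw [tPlus, mul_div_assoc']
  exact mul_div_cancel_left₀ _ (by positivity)

lemma phiDen_tPlus (hB : u ^ 2 + 2 * u - 1 ≠ 0) :
    phiDen u (tPlus u) = 4 * u ^ 2 * (u - 1) ^ 2 := by
  rw [phiDen]
  linear_combination 2 * mul_tPlus hB

lemma phi_tPlus (hB : u ^ 2 + 2 * u - 1 ≠ 0) (hu0 : u ≠ 0) (hu1 : u ≠ 1) :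
    phi u (tPlus u) = 1 - kParam u / 2 := by
  have : u - 1 ≠ 0 := sub_ne_zero.2 hu1
  rw [phi, phiDen_tPlus hB, kParam]
  field_simp
  linear_combination
    4 * ((u ^ 2 + 1) * (u ^ 2 + 2 * u - 1) * tPlus u + (u ^ 4 - 6 * u ^ 3 + 2 * u - 1)) *
      mul_tPlus hB

lemma quarticK_phi (ht : phiDen u t ≠ 0) (hB : u ^ 2 + 2 * u - 1 ≠ 0) :
    quarticK (kParam u) (phi u t) =
      ((u ^ 2 + 2 * u - 1) / (u ^ 2 + 1) * phiDeriv u t) ^ 2 * quarticI (tMinus u) (tPlus u) t := by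
  have hA : u ^ 2 + 1 ≠ 0 := by positivity
  have h1 : 1 - phi u t ^ 2 = 4 * (u ^ 2 + 2 * u - 1) ^ 2 * (1 - t ^ 2) *
      ((u ^ 2 + 2 * u - 1) * t + (u ^ 2 + 1)) ^ 2 / phiDen u t ^ 2 := by
    rw [phi]; field_simp; rw [phiDen]; ring
  have h2 : phi u t + kParam u / 2 - 1 =
      2 * (u ^ 2 + 2 * u - 1) ^ 2 * (t - tMinus u) * (t - tPlus u) / phiDen u t := by
    have hB' : u * (u + 2) - 1 ≠ 0 := by convert hB using 1; ring
    rw [phi, kParam, tMinus, tPlus]; field_simp; rw [phiDen]; ring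
  have h3 : phi u t + kParam u / 2 + 1 =
      2 * (u ^ 2 + 2 * u - 1) ^ 2 * ((u ^ 2 + 1) * t + (u ^ 2 + 2 * u - 1)) ^ 2 /
        ((u ^ 2 + 1) ^ 2 * phiDen u t) := by
    rw [phi, kParam]; field_simp; rw [phiDen]; ring
  rw [quarticK, quarticI, h1, h2, h3, phiDeriv]
  field_simp
  ring

lemma one_lt_of_sqrt_two_add_one_lt (hu : √2 + 1 < u) : 1 < u := by
  linarith [sqrt_nonneg 2]

lemma sq_sub_two_mul_sub_one_pos (hu : √2 + 1 < u) : 0 < u ^ 2 - 2 * u - 1 := by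
  have h : √2 < u - 1 := by linarith
  nlinarith [sq_sqrt (zero_le_two : (0 : ℝ) ≤ 2), sqrt_nonneg 2]

lemma tPlus_lt_one (hu : 1 < u) : tPlus u < 1 := by
  rw [tPlus, div_lt_one (by nlinarith)]
  nlinarith

lemma phiDen_pos (hu : 1 < u) (ht : tPlus u ≤ t) : 0 < phiDen u t := by
  have hAB : 0 < (u ^ 2 + 1) * (u ^ 2 + 2 * u - 1) := by nlinarith
  have hdiff := mul_le_mul_of_nonneg_left ht hAB.le
  have := phiDen_tPlus (u := u) (by nlinarith)
  rw [phiDen] at this ⊢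
  nlinarith [pow_pos (mul_pos (by linarith : (0:ℝ) < u) (by linarith : (0:ℝ) < u - 1)) 2]

lemma phiDeriv_pos (hu : √2 + 1 < u) (ht : tPlus u ≤ t) : 0 < phiDeriv u t := by
  have hu1 := one_lt_of_sqrt_two_add_one_lt hu
  have hu2 := sq_sub_two_mul_sub_one_pos hu
  have hA : 0 < u ^ 2 + 1 := by positivity
  have hB : 0 < u ^ 2 + 2 * u - 1 := by nlinarith
  have hdiff := mul_le_mul_of_nonneg_left ht (mul_pos hA hB).le
  have htp := mul_tPlus hB.ne'
  have h1 : 0 < (u ^ 2 + 1) * t + (u ^ 2 + 2 * u - 1) := by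
    refine pos_of_mul_pos_right (?_ : 0 < (u ^ 2 + 2 * u - 1) * _) hB.le
    nlinarith [mul_pos (mul_pos (by linarith : (0:ℝ) < u) (by linarith : (0:ℝ) < u - 1)) hA]
  have h2 : 0 < (u ^ 2 + 2 * u - 1) * t + (u ^ 2 + 1) := by
    refine pos_of_mul_pos_right (?_ : 0 < (u ^ 2 + 1) * _) hA.le
    nlinarith [mul_pos (mul_pos (by linarith : (0:ℝ) < u) (by linarith : (0:ℝ) < u - 1)) hu2]
  have := phiDen_pos hu1 ht
  rw [phiDeriv]
  positivity

lemma integrand_phi_mul_phiDeriv (hu : √2 + 1 < u) (ht : tPlus u ≤ t) :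
    1 / √(quarticK (kParam u) (phi u t)) * phiDeriv u t =
      (u ^ 2 + 1) / (u ^ 2 + 2 * u - 1) * (1 / √(quarticI (tMinus u) (tPlus u) t)) := by
  have hu1 := one_lt_of_sqrt_two_add_one_lt hu
  have hB : 0 < u ^ 2 + 2 * u - 1 := by nlinarith
  rw [quarticK_phi (phiDen_pos hu1 ht).ne' hB.ne',
    one_div_sqrt_sq_mul_mul (by positivity) (phiDeriv_pos hu ht), inv_div]

lemma integral_quarticK_eq (hu : √2 + 1 < u) :
    ∫ T in (1 - kParam u / 2)..1, 1 / √(quarticK (kParam u) T) =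
      (u ^ 2 + 1) / (u ^ 2 + 2 * u - 1) *
        ∫ t in (tPlus u)..1, 1 / √(quarticI (tMinus u) (tPlus u) t) := by
  have hu1 := one_lt_of_sqrt_two_add_one_lt hu
  have htp := (tPlus_lt_one hu1).le
  have hderiv : ∀ t ∈ Icc (tPlus u) 1, HasDerivAt (phi u) (phiDeriv u t) t :=
    fun t ht ↦ hasDerivAt_phi (phiDen_pos hu1 ht.1).ne'
  -- the integrand is unbounded at both ends: use the substitution rule that needs no continuity
  have hsubst := integral_comp_mul_deriv_of_deriv_nonneg
    (g := fun T ↦ 1 / √(quarticK (kParam u) T)) (a := tPlus u) (b := 1)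
    (by rw [uIcc_of_le htp]; exact fun t ht ↦ (hderiv t ht).continuousAt.continuousWithinAt)
    (by rw [min_eq_left htp, max_eq_right htp]; exact fun t ht ↦ hderiv t (Ioo_subset_Icc_self ht))
    (by rw [min_eq_left htp]; exact fun t ht ↦ (phiDeriv_pos hu ht.1.le).le)
  rw [phi_one, phi_tPlus (by nlinarith) (by positivity) hu1.ne'] at hsubst
  rw [← hsubst, ← integral_const_mul]
  refine integral_congr fun t ht ↦ ?_
  rw [uIcc_of_le htp] at ht
  exact integrand_phi_mul_phiDeriv hu ht.1

end Substitution

/-- Equation (eq4): for real `u > √2 + 1`, with `k = 16u(u²−1)/(u²+1)²` and `t₋, t₊` as in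
the paper, `K = (2(u²+1)/(u²+2u−1)) I`. -/
theorem K_eq_I_relation (u k tm tp : ℝ) (hu : Real.sqrt 2 + 1 < u)
    (hk : k = 16 * u * (u ^ 2 - 1) / (u ^ 2 + 1) ^ 2)
    (htm : tm = -(u ^ 4 + 2 * u ^ 3 - 6 * u - 1) / ((u ^ 2 + 1) * (u ^ 2 + 2 * u - 1)))
    (htp : tp = (u ^ 4 - 6 * u ^ 3 + 2 * u - 1) / ((u ^ 2 + 1) * (u ^ 2 + 2 * u - 1))) :
    (8 / π) * (∫ T in (1 - k / 2)..(1:ℝ),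
        1 / Real.sqrt ((1 - T ^ 2) * (T + k / 2 - 1) * (T + k / 2 + 1))) =
    (2 * (u ^ 2 + 1) / (u ^ 2 + 2 * u - 1)) *
      ((4 / π) * ∫ t in tp..(1:ℝ),
        1 / Real.sqrt ((1 - t ^ 2) * (t - tm) * (t - tp))) := by
  obtain rfl : k = kParam u := hk
  obtain rfl : tm = tMinus u := htm
  obtain rfl : tp = tPlus u := htp
  have h := integral_quarticK_eq hu
  simp only [quarticK, quarticI] at h
  rw [h]
  ring
end

section
/- Let a, c be real numbers with c ≠ 0 such that the Weierstrass curve W : Y² = X³ + (c²/4 − 1 − a²)X² + a²X over ℝ is nonsingular (its discriminant is nonzero). Then P = (1, c/2) and Q = (a², c a²/2) are points on W, and under the elliptic curve group law: P + Q = (0, 0), 2P = ( ((a² − 1)/c)², (a² − 1)(2a⁴ − a²c² − 4a² − c² + 2)/(2c³) ), and 2Q = ( ((a² − 1)/c)², −(a² − 1)(2a⁴ − a²c² − 4a² − c² + 2)/(2c³) ). -/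
/-!
The chord through `P = (1, c/2)` and `Q = (a², ca²/2)` has slope `c/2` (when `a² = 1` the two
points coincide and the tangent at `P` has the same slope), and the tangent at `P` has slope
`(c²/2 + 1 − a²)/c`; the addition formulas then give `P + Q = (0, 0)` and `2P`. Since `(0, 0)` has
order 2, `2Q = 2((0, 0) − P) = −2P`.
-/

open WeierstrassCurve

namespace WeierstrassCurve.Affine.Point

variable {F : Type*} [Field F] {W : Affine F} {x₁ x₂ x₃ y₁ y₂ y₃ : F}

lemma exists_some_eq_some_of_eq (h₁ : W.Nonsingular x₁ y₁) (hx : x₁ = x₂) (hy : y₁ = y₂) :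
    ∃ h₂ : W.Nonsingular x₂ y₂, some _ _ h₁ = some _ _ h₂ := by
  subst hx hy
  exact ⟨h₁, rfl⟩

lemma exists_some_add_some_eq [DecidableEq F] (h₁ : W.Nonsingular x₁ y₁)
    (h₂ : W.Nonsingular x₂ y₂) (hxy : ¬(x₁ = x₂ ∧ y₁ = W.negY x₂ y₂))
    (hx : W.addX x₁ x₂ (W.slope x₁ x₂ y₁ y₂) = x₃)
    (hy : W.addY x₁ x₂ y₁ (W.slope x₁ x₂ y₁ y₂) = y₃) :
    ∃ h₃ : W.Nonsingular x₃ y₃, some _ _ h₁ + some _ _ h₂ = some _ _ h₃ := by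
  rw [add_some hxy]
  exact exists_some_eq_some_of_eq _ hx hy

end WeierstrassCurve.Affine.Point

/-- The Weierstrass model `Y² = X(X² + (c²/4 − 1 − a²)X + a²)` of the curve
`a(x + 1/x) + (y + 1/y) + c = 0`, via `X = −a/(xy)`. -/
def symmetricCurveModel {F : Type*} [Field F] (a c : F) : Affine F :=
  { a₁ := 0, a₂ := c ^ 2 / 4 - 1 - a ^ 2, a₃ := 0, a₄ := a ^ 2, a₆ := 0 }

namespace symmetricCurveModel

open Affine

variable {F : Type*} [Field F] {a c : F}

lemma equation_iff {x y : F} : (symmetricCurveModel a c).Equation x y ↔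
    y ^ 2 = x ^ 3 + (c ^ 2 / 4 - 1 - a ^ 2) * x ^ 2 + a ^ 2 * x := by
  rw [Affine.equation_iff]
  simp [symmetricCurveModel]

lemma negY (x y : F) : (symmetricCurveModel a c).negY x y = -y := by
  simp [symmetricCurveModel]

lemma two_smul_some_zero_zero [DecidableEq F] (h : (symmetricCurveModel a c).Nonsingular 0 0) :
    2 • Point.some _ _ h = 0 := by
  rw [two_smul, Point.add_self_of_Y_eq (by rw [negY, neg_zero])]

variable [CharZero F]

lemma nonsingular_P (hΔ : (symmetricCurveModel a c).Δ ≠ 0) :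
    (symmetricCurveModel a c).Nonsingular 1 (c / 2) :=
  (equation_iff_nonsingular_of_Δ_ne_zero hΔ).mp <| equation_iff.mpr <| by ring

lemma nonsingular_Q (hΔ : (symmetricCurveModel a c).Δ ≠ 0) :
    (symmetricCurveModel a c).Nonsingular (a ^ 2) (c * a ^ 2 / 2) :=
  (equation_iff_nonsingular_of_Δ_ne_zero hΔ).mp <| equation_iff.mpr <| by ring

lemma not_vertical_P_Q (hc : c ≠ 0) :
    ¬(1 = a ^ 2 ∧ c / 2 = (symmetricCurveModel a c).negY (a ^ 2) (c * a ^ 2 / 2)) := by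
  rintro ⟨h, h'⟩
  rw [negY, ← h] at h'
  exact hc (by linear_combination h')

lemma P_ne_neg_P (hc : c ≠ 0) : c / 2 ≠ (symmetricCurveModel a c).negY 1 (c / 2) := by
  rw [negY]
  exact fun h ↦ hc (by linear_combination h)

variable [DecidableEq F]

lemma slope_P_Q (hc : c ≠ 0) :
    (symmetricCurveModel a c).slope 1 (a ^ 2) (c / 2) (c * a ^ 2 / 2) = c / 2 := by
  by_cases h : (1 : F) = a ^ 2
  · rw [slope_of_Y_ne h fun h' ↦ not_vertical_P_Q hc ⟨h, h'⟩]
    simp only [symmetricCurveModel, ← h, Affine.negY, one_pow, mul_one, zero_mul, sub_zero]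
    field_simp
    ring
  · rw [slope_of_X_ne h, div_eq_iff (sub_ne_zero.mpr h)]
    ring

lemma slope_P_P (hc : c ≠ 0) :
    (symmetricCurveModel a c).slope 1 1 (c / 2) (c / 2) = (c ^ 2 / 2 + 1 - a ^ 2) / c := by
  rw [slope_of_Y_ne rfl (P_ne_neg_P hc)]
  simp only [symmetricCurveModel, Affine.negY, one_pow, mul_one, zero_mul, sub_zero]
  field_simp
  ring

lemma exists_P_add_Q (hc : c ≠ 0) (hP : (symmetricCurveModel a c).Nonsingular 1 (c / 2))
    (hQ : (symmetricCurveModel a c).Nonsingular (a ^ 2) (c * a ^ 2 / 2)) :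
    ∃ h : (symmetricCurveModel a c).Nonsingular 0 0,
      Point.some _ _ hP + Point.some _ _ hQ = Point.some _ _ h :=
  Point.exists_some_add_some_eq hP hQ (not_vertical_P_Q hc)
    (by rw [slope_P_Q hc]; simp only [addX, symmetricCurveModel]; ring)
    (by rw [slope_P_Q hc, addY, negY]; simp only [negAddY, addX, symmetricCurveModel]; ring)

lemma exists_two_smul_P (hc : c ≠ 0) (hP : (symmetricCurveModel a c).Nonsingular 1 (c / 2)) :
    ∃ h : (symmetricCurveModel a c).Nonsingular (((a ^ 2 - 1) / c) ^ 2)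
        ((a ^ 2 - 1) * (2 * a ^ 4 - a ^ 2 * c ^ 2 - 4 * a ^ 2 - c ^ 2 + 2) / (2 * c ^ 3)),
      2 • Point.some _ _ hP = Point.some _ _ h := by
  rw [two_smul]
  exact Point.exists_some_add_some_eq hP hP (fun h ↦ P_ne_neg_P hc h.2)
    (by rw [slope_P_P hc]; simp only [addX, symmetricCurveModel]; field_simp; ring)
    (by
      rw [slope_P_P hc, addY, negY]
      simp only [negAddY, addX, symmetricCurveModel]
      field_simp
      ring)

end symmetricCurveModel

/-- On the Weierstrass curve `W : Y² = X³ + (c²/4 − 1 − a²)X² + a²X` (assumed nonsingular,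
i.e. with nonzero discriminant), `P = (1, c/2)` and `Q = (a², ca²/2)` are points, and
`P + Q = (0, 0)`, `2P = (((a²−1)/c)², (a²−1)(2a⁴−a²c²−4a²−c²+2)/(2c³))`, and
`2Q` is the same point with opposite `Y`-coordinate. -/
theorem points_P_Q_sum_and_doubling (a c : ℝ) (hc : c ≠ 0) (W : Affine ℝ)
    (hW : W = { a₁ := 0, a₂ := c ^ 2 / 4 - 1 - a ^ 2, a₃ := 0, a₄ := a ^ 2, a₆ := 0 })
    (hΔ : W.Δ ≠ 0) :
    ∃ (hP : W.Nonsingular 1 (c / 2))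
      (hQ : W.Nonsingular (a ^ 2) (c * a ^ 2 / 2))
      (h00 : W.Nonsingular 0 0)
      (h2P : W.Nonsingular (((a ^ 2 - 1) / c) ^ 2)
        ((a ^ 2 - 1) * (2 * a ^ 4 - a ^ 2 * c ^ 2 - 4 * a ^ 2 - c ^ 2 + 2) / (2 * c ^ 3)))
      (h2Q : W.Nonsingular (((a ^ 2 - 1) / c) ^ 2)
        (-((a ^ 2 - 1) * (2 * a ^ 4 - a ^ 2 * c ^ 2 - 4 * a ^ 2 - c ^ 2 + 2) / (2 * c ^ 3)))),
      Affine.Point.some _ _ hP + Affine.Point.some _ _ hQ = Affine.Point.some _ _ h00 ∧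
      2 • Affine.Point.some _ _ hP = Affine.Point.some _ _ h2P ∧
      2 • Affine.Point.some _ _ hQ = Affine.Point.some _ _ h2Q := by
  obtain rfl : W = symmetricCurveModel a c := hW
  have hP := symmetricCurveModel.nonsingular_P hΔ
  have hQ := symmetricCurveModel.nonsingular_Q hΔ
  obtain ⟨h00, hPQ⟩ := symmetricCurveModel.exists_P_add_Q hc hP hQ
  obtain ⟨h2P, h2P_eq⟩ := symmetricCurveModel.exists_two_smul_P hc hP
  obtain ⟨h2Q, h2Q_eq⟩ := Affine.Point.exists_some_eq_some_of_eq
    ((Affine.nonsingular_neg ..).mpr h2P) rfl (symmetricCurveModel.negY _ _)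
  refine ⟨hP, hQ, h00, h2P, h2Q, hPQ, h2P_eq, ?_⟩
  rw [eq_sub_of_add_eq' hPQ, nsmul_sub, symmetricCurveModel.two_smul_some_zero_zero, zero_sub,
    h2P_eq, Affine.Point.neg_some, h2Q_eq]
end

section
/- Let c be a real number with c ≠ 0 such that the Weierstrass curve W : Y² = X³ + (c²/4 − 2)X² + X over ℝ is nonsingular (its discriminant is nonzero; equivalently c ∉ {0, 4, −4}). Then the point P = (1, c/2) on W has order exactly 4 in the group of points of W; in particular 2P = (0, 0). -/
/-! The tangent to `Y² = X³ + bX² + X` at a point `P = (1, y)` has slope `(4 + 2b) / 2y = y`,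
since `y² = b + 2`. It meets the curve a third time at `X = y² - b - 2 = 0`, so `2P = (0, 0)`,
which is a `2`-torsion point since the tangent there is vertical. Hence `P` has order `4`. -/

open WeierstrassCurve

namespace WeierstrassCurve.Affine

variable {F : Type*} [Field F]

def ofA₂ (b : F) : Affine F :=
  { a₁ := 0, a₂ := b, a₃ := 0, a₄ := 1, a₆ := 0 }

lemma ofA₂_nonsingular_zero_zero (b : F) : (ofA₂ b).Nonsingular 0 0 :=
  nonsingular_zero.mpr ⟨rfl, .inr one_ne_zero⟩

lemma ofA₂_two_nsmul_zero_zero [DecidableEq F] (b : F) :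
    2 • Point.some _ _ (ofA₂_nonsingular_zero_zero b) = 0 := by
  rw [two_nsmul]
  exact Point.add_self_of_Y_eq (by simp [ofA₂, negY])

variable [NeZero (2 : F)] {b y : F}

lemma ofA₂_Y_ne_negY (hy : y ≠ 0) : y ≠ (ofA₂ b).negY 1 y := by
  simp only [ofA₂, negY, mul_one, sub_zero, ne_eq]
  intro h
  exact hy ((mul_eq_zero.mp (by linear_combination h : 2 * y = 0)).resolve_left two_ne_zero)

lemma ofA₂_nonsingular_one (hb : y ^ 2 = b + 2) (hy : y ≠ 0) : (ofA₂ b).Nonsingular 1 y := by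
  refine (nonsingular_iff _ _).mpr ⟨(equation_iff _ _).mpr ?_, .inr (ofA₂_Y_ne_negY hy)⟩
  simp only [ofA₂]
  linear_combination hb

variable [DecidableEq F]

lemma ofA₂_slope_one (hb : y ^ 2 = b + 2) (hy : y ≠ 0) : (ofA₂ b).slope 1 1 y y = y := by
  rw [slope_of_Y_ne rfl (ofA₂_Y_ne_negY hy), div_eq_iff (sub_ne_zero.mpr (ofA₂_Y_ne_negY hy))]
  simp only [ofA₂, negY]
  linear_combination -2 * hb

lemma ofA₂_addX_one (hb : y ^ 2 = b + 2) (hy : y ≠ 0) :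
    (ofA₂ b).addX 1 1 ((ofA₂ b).slope 1 1 y y) = 0 := by
  rw [ofA₂_slope_one hb hy, addX]
  simp only [ofA₂]
  linear_combination hb

lemma ofA₂_two_nsmul_one (hb : y ^ 2 = b + 2) (hy : y ≠ 0) :
    2 • Point.some _ _ (ofA₂_nonsingular_one hb hy) =
      Point.some _ _ (ofA₂_nonsingular_zero_zero b) := by
  rw [two_nsmul, Point.add_of_Y_ne (ofA₂_Y_ne_negY hy), Point.some.injEq, addY,
    negAddY, ofA₂_addX_one hb hy, ofA₂_slope_one hb hy]
  simp [ofA₂, negY]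

lemma ofA₂_addOrderOf_one (hb : y ^ 2 = b + 2) (hy : y ≠ 0) :
    addOrderOf (Point.some _ _ (ofA₂_nonsingular_one hb hy)) = 4 := by
  have h4 : (2 ^ 2) • Point.some _ _ (ofA₂_nonsingular_one hb hy) = 0 := by
    rw [sq, mul_nsmul, ofA₂_two_nsmul_one hb hy, ofA₂_two_nsmul_zero_zero]
  refine addOrderOf_eq_prime_pow (p := 2) (n := 1) ?_ h4
  rw [pow_one, ofA₂_two_nsmul_one hb hy]
  exact Point.some_ne_zero _

end WeierstrassCurve.Affine

theorem point_P_has_order_four_general (c : ℝ) (hc : c ≠ 0) (W : Affine ℝ)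
    (hW : W = { a₁ := 0, a₂ := c ^ 2 / 4 - 2, a₃ := 0, a₄ := 1, a₆ := 0 }) :
    ∃ (hP : W.Nonsingular 1 (c / 2)) (h00 : W.Nonsingular 0 0),
      addOrderOf (Affine.Point.some _ _ hP) = 4 ∧
      2 • Affine.Point.some _ _ hP = Affine.Point.some _ _ h00 := by
  subst hW
  have hb : (c / 2) ^ 2 = (c ^ 2 / 4 - 2) + 2 := by ring
  have hy : c / 2 ≠ 0 := div_ne_zero hc two_ne_zero
  exact ⟨Affine.ofA₂_nonsingular_one hb hy, Affine.ofA₂_nonsingular_zero_zero _,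
    Affine.ofA₂_addOrderOf_one hb hy, Affine.ofA₂_two_nsmul_one hb hy⟩

/-- On the Weierstrass curve `W : Y² = X³ + (c²/4 − 2)X² + X` (the case `a = 1`), assumed
nonsingular, the point `P = (1, c/2)` has order exactly `4`; in particular `2P = (0, 0)`. -/
theorem point_P_has_order_four (c : ℝ) (hc : c ≠ 0) (W : Affine ℝ)
    (hW : W = { a₁ := 0, a₂ := c ^ 2 / 4 - 2, a₃ := 0, a₄ := 1, a₆ := 0 })
    (hΔ : W.Δ ≠ 0) :
    ∃ (hP : W.Nonsingular 1 (c / 2)) (h00 : W.Nonsingular 0 0),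
      addOrderOf (Affine.Point.some _ _ hP) = 4 ∧
      2 • Affine.Point.some _ _ hP = Affine.Point.some _ _ h00 :=
  point_P_has_order_four_general c hc W hW
end

section
/- Let a > 1 be real and set c = √2(a² − 1)/√(a² + 1). Assume the Weierstrass curve W : Y² = X³ + (c²/4 − 1 − a²)X² + a²X over ℝ is nonsingular (its discriminant is nonzero). Then the points P = (1, c/2) and Q = (a², c a²/2) on W satisfy 2P = 2Q = ((a² + 1)/2, 0) under the elliptic curve group law. -/
open WeierstrassCurve

/-!
The choice of `c` is exactly the relation `c² (a² + 1) = 2 (a² − 1)²`. On a curve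
`Y² = X³ + AX² + BX` the tangent at `(x, y)` meets the curve again at `X = (x² − B)² / (2y)²`,
which for both `P` and `Q` equals `(a² − 1)² / c² = (a² + 1) / 2` by that relation. Since
`R = ((a² + 1) / 2, 0)` lies on `W` and is its own negative, the only point of `W` with this
`X`-coordinate is `R`, so `2P = 2Q = R`.
-/

namespace WeierstrassCurve.Affine

variable {F : Type*} [Field F] {W : Affine F}

lemma Point.some_eq_some_of_X_eq_of_Y_eq_negY {x₁ y₁ x₂ y₂ : F} (h₁ : W.Nonsingular x₁ y₁)
    (h₂ : W.Nonsingular x₂ y₂) (hx : x₁ = x₂) (hy₂ : y₂ = W.negY x₂ y₂) :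
    some _ _ h₁ = some _ _ h₂ := by
  obtain rfl := hx
  obtain rfl : y₁ = y₂ := (Y_eq_of_X_eq h₁.1 h₂.1 rfl).elim id (·.trans hy₂.symm)
  rfl

variable [DecidableEq F]

lemma Point.two_nsmul_some_eq_of_addX_eq {x y x' y' : F} (h : W.Nonsingular x y)
    (h' : W.Nonsingular x' y') (hy : y ≠ W.negY x y) (hy' : y' = W.negY x' y')
    (hx : W.addX x x (W.slope x x y y) = x') :
    2 • some _ _ h = some _ _ h' := by
  rw [two_nsmul, add_self_of_Y_ne hy]
  exact some_eq_some_of_X_eq_of_Y_eq_negY _ _ hx hy'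

lemma addX_slope_self_of_a₁_a₃_a₆_eq_zero (ha₁ : W.a₁ = 0) (ha₃ : W.a₃ = 0) (ha₆ : W.a₆ = 0)
    {x y : F} (h : W.Equation x y) (hy : y ≠ W.negY x y) :
    W.addX x x (W.slope x x y y) = (x ^ 2 - W.a₄) ^ 2 / (2 * y) ^ 2 := by
  have h2y : 2 * y ≠ 0 := by
    contrapose! hy
    rw [negY, ha₁, ha₃]
    linear_combination hy
  obtain ⟨h2, hy0⟩ := mul_ne_zero_iff.1 h2y
  have hslope : W.slope x x y y = (3 * x ^ 2 + 2 * W.a₂ * x + W.a₄) / (2 * y) := by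
    rw [slope_of_Y_ne rfl hy, negY, ha₁, ha₃]
    ring
  rw [equation_iff, ha₁, ha₃, ha₆] at h
  rw [addX, hslope, ha₁]
  field_simp
  linear_combination (-4 * (W.a₂ + 2 * x)) * h

end WeierstrassCurve.Affine

open Affine.Point in
/-- Remark 1, condition (c0): for real `a > 1` and `c = √2(a²−1)/√(a²+1)`, on the nonsingular
Weierstrass curve `W : Y² = X³ + (c²/4 − 1 − a²)X² + a²X` the points `P = (1, c/2)` and
`Q = (a², ca²/2)` satisfy `2P = 2Q = ((a²+1)/2, 0)`. -/
theorem doubling_P_Q_special (a c : ℝ) (ha : 1 < a)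
    (hc : c = Real.sqrt 2 * (a ^ 2 - 1) / Real.sqrt (a ^ 2 + 1)) (W : Affine ℝ)
    (hW : W = { a₁ := 0, a₂ := c ^ 2 / 4 - 1 - a ^ 2, a₃ := 0, a₄ := a ^ 2, a₆ := 0 })
    (hΔ : W.Δ ≠ 0) :
    ∃ (hP : W.Nonsingular 1 (c / 2))
      (hQ : W.Nonsingular (a ^ 2) (c * a ^ 2 / 2))
      (hR : W.Nonsingular ((a ^ 2 + 1) / 2) 0),
      2 • Affine.Point.some _ _ hP = Affine.Point.some _ _ hR ∧
      2 • Affine.Point.some _ _ hQ = Affine.Point.some _ _ hR := by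
  subst hW
  have ha2 : 0 < a ^ 2 + 1 := by positivity
  have hc0 : c ≠ 0 := by
    have : 0 < a ^ 2 - 1 := by nlinarith
    rw [hc]; positivity
  have hc2 : c ^ 2 * (a ^ 2 + 1) = 2 * (a ^ 2 - 1) ^ 2 := by
    rw [hc, div_pow, mul_pow, Real.sq_sqrt zero_le_two, Real.sq_sqrt ha2.le,
      div_mul_cancel₀ _ ha2.ne']
  have nonsingular := fun x y ↦
    (Affine.equation_iff_nonsingular_of_Δ_ne_zero (x := x) (y := y) hΔ).1
  have hP := nonsingular 1 (c / 2) (by rw [Affine.equation_iff]; ring)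
  have hQ := nonsingular (a ^ 2) (c * a ^ 2 / 2) (by rw [Affine.equation_iff]; ring)
  have hR := nonsingular ((a ^ 2 + 1) / 2) 0 (by
    rw [Affine.equation_iff]; field_simp; linear_combination (-2 * (a ^ 2 + 1)) * hc2)
  have hyP : c / 2 ≠ -(c / 2) - 0 * 1 - 0 := by
    intro h; apply hc0; linarith
  have hyQ : c * a ^ 2 / 2 ≠ -(c * a ^ 2 / 2) - 0 * a ^ 2 - 0 := by
    have : c * a ^ 2 ≠ 0 := mul_ne_zero hc0 (by positivity)
    intro h; apply this; linarith
  refine ⟨hP, hQ, hR, two_nsmul_some_eq_of_addX_eq hP hR hyP (by simp) ?_,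
    two_nsmul_some_eq_of_addX_eq hQ hR hyQ (by simp) ?_⟩
  · rw [Affine.addX_slope_self_of_a₁_a₃_a₆_eq_zero rfl rfl rfl hP.1 hyP]
    field_simp
    linear_combination -hc2
  · rw [Affine.addX_slope_self_of_a₁_a₃_a₆_eq_zero rfl rfl rfl hQ.1 hyQ]
    field_simp
    linear_combination -hc2
end

section
/- Let a be a real number with a² ≠ 1 and set c = a² − 1. Assume the Weierstrass curve W : Y² = X³ + (c²/4 − 1 − a²)X² + a²X over ℝ is nonsingular (its discriminant is nonzero). Then the points P = (1, c/2) and Q = (a², c a²/2) on W satisfy 3P = O and 3Q = (0, 0) under the elliptic curve group law; in particular P has order 3. -/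
/-!
With `c = a² − 1`, the tangent to `W` at `P = (1, c/2)` has slope `(a² − 3)/2` and meets `W`
again at `(1, −c/2) = −P`, so `P` is a flex and `3P = O`. The tangent at `Q = (a², ca²/2)` has
slope `(a² + 1)/2` and gives `2Q = P`, and the chord through `P` and `Q` has slope `c/2` and meets
`W` again at the `2`-torsion point `(0, 0)`, so `3Q = P + Q = (0, 0)`. Since
`Δ = a⁴(a² − 1)³(a² − 9)`, nonsingularity gives `a ≠ 0`, which keeps `Q` and `(0, 0)` nonsingular.
-/

open WeierstrassCurve

namespace WeierstrassCurve.Affine.Point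

variable {F : Type*} [Field F] [DecidableEq F] {W : Affine F}

lemma some_add_some_eq_some {x₁ x₂ x₃ y₁ y₂ y₃ ℓ : F} {h₁ : W.Nonsingular x₁ y₁}
    {h₂ : W.Nonsingular x₂ y₂} (h₃ : W.Nonsingular x₃ y₃) (hxy : ¬(x₁ = x₂ ∧ y₁ = W.negY x₂ y₂))
    (hℓ : W.slope x₁ x₂ y₁ y₂ = ℓ) (hx : W.addX x₁ x₂ ℓ = x₃) (hy : W.addY x₁ x₂ y₁ ℓ = y₃) :
    some _ _ h₁ + some _ _ h₂ = some _ _ h₃ := by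
  subst hℓ hx hy
  exact add_some hxy

end WeierstrassCurve.Affine.Point

variable {F : Type*} [Field F]

/-- The curve `W` with `c = a² − 1` substituted. -/
def torsionSixCurve (a : F) : WeierstrassCurve F :=
  { a₁ := 0, a₂ := (a ^ 2 - 1) ^ 2 / 4 - 1 - a ^ 2, a₃ := 0, a₄ := a ^ 2, a₆ := 0 }

namespace torsionSixCurve

open Affine Point

variable {a : F}

instance (a : F) : (torsionSixCurve a).IsCharNeTwoNF := ⟨rfl, rfl⟩

lemma equation_zero (a : F) : (torsionSixCurve a).toAffine.Equation 0 0 := by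
  rw [equation_iff]
  simp only [torsionSixCurve]
  ring

lemma nonsingular_zero (ha₀ : a ≠ 0) : (torsionSixCurve a).toAffine.Nonsingular 0 0 := by
  refine (nonsingular_iff ..).mpr ⟨equation_zero a, .inl ?_⟩
  simpa [torsionSixCurve] using (pow_ne_zero 2 ha₀).symm

variable [CharZero F]

lemma Δ_eq (a : F) : (torsionSixCurve a).Δ = a ^ 4 * (a ^ 2 - 1) ^ 3 * (a ^ 2 - 9) := by
  rw [Δ_of_isCharNeTwoNF]
  simp only [torsionSixCurve]
  ring

lemma ne_zero_of_Δ_ne_zero (hΔ : (torsionSixCurve a).Δ ≠ 0) : a ≠ 0 := by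
  rintro rfl
  exact hΔ (by rw [Δ_eq]; ring)

lemma equation_P (a : F) : (torsionSixCurve a).toAffine.Equation 1 ((a ^ 2 - 1) / 2) := by
  rw [equation_iff]
  simp only [torsionSixCurve]
  ring

lemma equation_Q (a : F) :
    (torsionSixCurve a).toAffine.Equation (a ^ 2) ((a ^ 2 - 1) * a ^ 2 / 2) := by
  rw [equation_iff]
  simp only [torsionSixCurve]
  ring

lemma Y_ne_negY_P (ha : a ^ 2 ≠ 1) :
    (a ^ 2 - 1) / 2 ≠ (torsionSixCurve a).toAffine.negY 1 ((a ^ 2 - 1) / 2) := by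
  simp only [negY, torsionSixCurve]
  intro h
  exact ha (by linear_combination h)

lemma Y_ne_negY_Q (ha₀ : a ≠ 0) (ha : a ^ 2 ≠ 1) :
    (a ^ 2 - 1) * a ^ 2 / 2 ≠
      (torsionSixCurve a).toAffine.negY (a ^ 2) ((a ^ 2 - 1) * a ^ 2 / 2) := by
  simp only [negY, torsionSixCurve]
  intro h
  exact mul_ne_zero (sub_ne_zero.mpr ha) (pow_ne_zero 2 ha₀) (by linear_combination h)

lemma nonsingular_P (ha : a ^ 2 ≠ 1) :
    (torsionSixCurve a).toAffine.Nonsingular 1 ((a ^ 2 - 1) / 2) :=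
  (nonsingular_iff ..).mpr ⟨equation_P a, .inr (Y_ne_negY_P ha)⟩

lemma nonsingular_Q (ha₀ : a ≠ 0) (ha : a ^ 2 ≠ 1) :
    (torsionSixCurve a).toAffine.Nonsingular (a ^ 2) ((a ^ 2 - 1) * a ^ 2 / 2) :=
  (nonsingular_iff ..).mpr ⟨equation_Q a, .inr (Y_ne_negY_Q ha₀ ha)⟩

variable [DecidableEq F]

lemma P_add_P (ha : a ^ 2 ≠ 1) :
    some _ _ (nonsingular_P ha) + some _ _ (nonsingular_P ha) = -some _ _ (nonsingular_P ha) := by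
  refine some_add_some_eq_some _ (fun h => Y_ne_negY_P ha h.2) (ℓ := (a ^ 2 - 3) / 2) ?_ ?_ ?_
  · rw [slope_of_Y_ne rfl (Y_ne_negY_P ha), div_eq_iff (sub_ne_zero.mpr (Y_ne_negY_P ha))]
    simp only [negY, torsionSixCurve]
    ring
  · simp only [addX, torsionSixCurve]
    ring
  · simp only [addY, negAddY, addX, negY, torsionSixCurve]
    ring

lemma Q_add_Q (ha₀ : a ≠ 0) (ha : a ^ 2 ≠ 1) :
    some _ _ (nonsingular_Q ha₀ ha) + some _ _ (nonsingular_Q ha₀ ha) =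
      some _ _ (nonsingular_P ha) := by
  have hy := Y_ne_negY_Q ha₀ ha
  refine some_add_some_eq_some _ (fun h => hy h.2) (ℓ := (a ^ 2 + 1) / 2) ?_ ?_ ?_
  · rw [slope_of_Y_ne rfl hy, div_eq_iff (sub_ne_zero.mpr hy)]
    simp only [negY, torsionSixCurve]
    ring
  · simp only [addX, torsionSixCurve]
    ring
  · simp only [addY, negAddY, addX, negY, torsionSixCurve]
    ring

lemma P_add_Q (ha₀ : a ≠ 0) (ha : a ^ 2 ≠ 1) :
    some _ _ (nonsingular_P ha) + some _ _ (nonsingular_Q ha₀ ha) =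
      some _ _ (nonsingular_zero ha₀) := by
  have hx : (1 : F) ≠ a ^ 2 := Ne.symm ha
  refine some_add_some_eq_some _ (fun h => hx h.1) (ℓ := (a ^ 2 - 1) / 2) ?_ ?_ ?_
  · rw [slope_of_X_ne hx, div_eq_iff (sub_ne_zero.mpr hx)]
    ring
  · simp only [addX, torsionSixCurve]
    ring
  · simp only [addY, negAddY, addX, negY, torsionSixCurve]
    ring

lemma three_nsmul_P (ha : a ^ 2 ≠ 1) : 3 • some _ _ (nonsingular_P ha) = 0 := by
  rw [succ_nsmul, two_nsmul, P_add_P ha, neg_add_cancel]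

lemma three_nsmul_Q (ha₀ : a ≠ 0) (ha : a ^ 2 ≠ 1) :
    3 • some _ _ (nonsingular_Q ha₀ ha) = some _ _ (nonsingular_zero ha₀) := by
  rw [succ_nsmul, two_nsmul, Q_add_Q ha₀ ha, P_add_Q ha₀ ha]

lemma addOrderOf_P (ha : a ^ 2 ≠ 1) : addOrderOf (some _ _ (nonsingular_P ha)) = 3 :=
  have : Fact (Nat.Prime 3) := ⟨Nat.prime_three⟩
  addOrderOf_eq_prime (three_nsmul_P ha) (some_ne_zero _)

end torsionSixCurve

/-- Remark 1, condition (torsion6): for real `a` with `a² ≠ 1` and `c = a² − 1`, on the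
nonsingular Weierstrass curve `W : Y² = X³ + (c²/4 − 1 − a²)X² + a²X` the points
`P = (1, c/2)` and `Q = (a², ca²/2)` satisfy `3P = O` and `3Q = (0, 0)`; in particular
`P` has order `3`. -/
theorem torsion_three_special (a c : ℝ) (ha : a ^ 2 ≠ 1) (hc : c = a ^ 2 - 1)
    (W : Affine ℝ)
    (hW : W = { a₁ := 0, a₂ := c ^ 2 / 4 - 1 - a ^ 2, a₃ := 0, a₄ := a ^ 2, a₆ := 0 })
    (hΔ : W.Δ ≠ 0) :
    ∃ (hP : W.Nonsingular 1 (c / 2))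
      (hQ : W.Nonsingular (a ^ 2) (c * a ^ 2 / 2))
      (h00 : W.Nonsingular 0 0),
      3 • Affine.Point.some _ _ hP = 0 ∧
      3 • Affine.Point.some _ _ hQ = Affine.Point.some _ _ h00 ∧
      addOrderOf (Affine.Point.some _ _ hP) = 3 := by
  subst hc hW
  have ha₀ : a ≠ 0 := torsionSixCurve.ne_zero_of_Δ_ne_zero hΔ
  exact ⟨_, _, _, torsionSixCurve.three_nsmul_P ha, torsionSixCurve.three_nsmul_Q ha₀ ha,
    torsionSixCurve.addOrderOf_P ha⟩
end

section
/- Let a, c ∈ ℂ and assume the Weierstrass curve W : Y² = X³ + (c²/4 − 1 − a²)X² + a²X over ℂ is nonsingular (its discriminant is nonzero). Let s ∈ ℂ satisfy s² = (1 − c/2)² − a², and let t ∈ ℂ satisfy t² = (1 + c/2)² − a². Then S = (1 − c/2 − s, s(1 − c/2 − s)) and T = (1 + c/2 + t, t(1 + c/2 + t)) are points on W, and under the elliptic curve group law 2S = 2T = P, where P = (1, c/2). -/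
/-!
The tangent to `W` at `S` is the line of slope `s - 1` through `S`, and the tangent at `T` is the
line of slope `t + 1` through `T`; both lines pass through `-P = (1, -c/2)`. Hence the chord-tangent
construction gives `2S = 2T = P`. The tangents are not vertical: `Δ = 16a⁴((c²/4 - 1 - a²)² - 4a²)`,
and the `Y`-coordinates `sX`, `tX` of `S`, `T` can only vanish if `a = 0` or if the second factor
does.
-/

open WeierstrassCurve

namespace WeierstrassCurve.Affine

variable {F : Type*} [Field F] [DecidableEq F] {W : Affine F}

lemma two_nsmul_some_of_tangent {x y ℓ x' y' : F} (h : W.Nonsingular x y)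
    (h' : W.Nonsingular x' y') (hy : y ≠ W.negY x y)
    (hℓ : ℓ * (y - W.negY x y) = 3 * x ^ 2 + 2 * W.a₂ * x + W.a₄ - W.a₁ * y)
    (hx' : W.addX x x ℓ = x') (hy' : W.addY x x y ℓ = y') :
    2 • Point.some _ _ h = Point.some _ _ h' := by
  have hslope : W.slope x x y y = ℓ := by
    rw [slope_of_Y_ne rfl hy, div_eq_iff (sub_ne_zero.mpr hy), hℓ]
  rw [two_nsmul, Point.add_self_of_Y_ne hy, Point.some.injEq, hslope]
  exact ⟨hx', hy'⟩

end WeierstrassCurve.Affine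

lemma WeierstrassCurve.Δ_of_a₁_a₃_a₆_eq_zero {R : Type*} [CommRing R] (A B : R) :
    ({ a₁ := 0, a₂ := A, a₃ := 0, a₄ := B, a₆ := 0 } : WeierstrassCurve R).Δ
      = 16 * B ^ 2 * (A ^ 2 - 4 * B) := by
  simp only [Δ, b₂, b₄, b₆, b₈]
  ring

namespace WeierstrassModel

open Affine

variable {F : Type*} [Field F] {a c : F}

/-- The Weierstrass model of `a (x + 1/x) + (y + 1/y) + c = 0`. -/
abbrev curve (a c : F) : Affine F :=
  { a₁ := 0, a₂ := c ^ 2 / 4 - 1 - a ^ 2, a₃ := 0, a₄ := a ^ 2, a₆ := 0 }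

lemma ne_zero_of_Δ_ne_zero (hΔ : (curve a c).Δ ≠ 0) :
    a ≠ 0 ∧ (c ^ 2 / 4 - 1 - a ^ 2) ^ 2 - 4 * a ^ 2 ≠ 0 := by
  rw [Δ_of_a₁_a₃_a₆_eq_zero] at hΔ
  obtain ⟨h16a, hdisc⟩ := mul_ne_zero_iff.mp hΔ
  refine ⟨?_, hdisc⟩
  rintro rfl
  simp at h16a

variable [CharZero F]

lemma nonsingular_of_equation (hΔ : (curve a c).Δ ≠ 0) {x y : F}
    (h : y ^ 2 = x ^ 3 + (c ^ 2 / 4 - 1 - a ^ 2) * x ^ 2 + a ^ 2 * x) :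
    (curve a c).Nonsingular x y := by
  refine (equation_iff_nonsingular_of_Δ_ne_zero hΔ).mp ?_
  rw [equation_iff]
  linear_combination h

lemma nonsingular_P (hΔ : (curve a c).Δ ≠ 0) : (curve a c).Nonsingular 1 (c / 2) :=
  nonsingular_of_equation hΔ (by ring)

lemma Y_ne_negY {x y : F} (hy : y ≠ 0) : y ≠ (curve a c).negY x y := by
  simp only [negY, zero_mul, sub_zero]
  intro h
  exact hy (by linear_combination h / 2)

section S

variable {s : F} (hΔ : (curve a c).Δ ≠ 0) (hs : s ^ 2 = (1 - c / 2) ^ 2 - a ^ 2)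
include hΔ hs

lemma nonsingular_S : (curve a c).Nonsingular (1 - c / 2 - s) (s * (1 - c / 2 - s)) :=
  nonsingular_of_equation hΔ (by linear_combination ((1 - c / 2 - s) * (1 - c / 2 - s - 1)) * hs)

lemma two_nsmul_S [DecidableEq F] :
    2 • Point.some _ _ (nonsingular_S hΔ hs) = Point.some _ _ (nonsingular_P hΔ) := by
  obtain ⟨ha, hdisc⟩ := ne_zero_of_Δ_ne_zero hΔ
  have hs0 : s ≠ 0 := by
    rintro rfl
    exact hdisc (by linear_combination (a ^ 2 + (1 - c / 2) ^ 2 - 2 * (c ^ 2 / 4 - 1) - 4) * hs)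
  have hx : 1 - c / 2 - s ≠ 0 := by
    intro h
    exact pow_ne_zero 2 ha (by linear_combination (1 - c / 2 + s) * h + hs)
  refine two_nsmul_some_of_tangent (ℓ := s - 1) _ _ (Y_ne_negY (mul_ne_zero hs0 hx)) ?_ ?_ ?_
  all_goals simp only [negY, addX, addY, negAddY]
  · linear_combination (1 - c - 2 * s) * hs
  · linear_combination hs
  · linear_combination (1 - s) * hs

end S

section T

variable {t : F} (hΔ : (curve a c).Δ ≠ 0) (ht : t ^ 2 = (1 + c / 2) ^ 2 - a ^ 2)
include hΔ ht

lemma nonsingular_T : (curve a c).Nonsingular (1 + c / 2 + t) (t * (1 + c / 2 + t)) :=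
  nonsingular_of_equation hΔ (by linear_combination ((1 + c / 2 + t) * (1 + c / 2 + t - 1)) * ht)

lemma two_nsmul_T [DecidableEq F] :
    2 • Point.some _ _ (nonsingular_T hΔ ht) = Point.some _ _ (nonsingular_P hΔ) := by
  obtain ⟨ha, hdisc⟩ := ne_zero_of_Δ_ne_zero hΔ
  have ht0 : t ≠ 0 := by
    rintro rfl
    exact hdisc (by linear_combination (a ^ 2 + (1 + c / 2) ^ 2 - 2 * (c ^ 2 / 4 - 1) - 4) * ht)
  have hx : 1 + c / 2 + t ≠ 0 := by
    intro h
    exact pow_ne_zero 2 ha (by linear_combination (1 + c / 2 - t) * h + ht)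
  refine two_nsmul_some_of_tangent (ℓ := t + 1) _ _ (Y_ne_negY (mul_ne_zero ht0 hx)) ?_ ?_ ?_
  all_goals simp only [negY, addX, addY, negAddY]
  · linear_combination (1 + c + 2 * t) * ht
  · linear_combination ht
  · linear_combination (-1 - t) * ht

end T

end WeierstrassModel

/-- On the nonsingular Weierstrass curve `W : Y² = X³ + (c²/4 − 1 − a²)X² + a²X` over `ℂ`,
with `s² = (1 − c/2)² − a²` and `t² = (1 + c/2)² − a²`, the points
`S = (1 − c/2 − s, s(1 − c/2 − s))` and `T = (1 + c/2 + t, t(1 + c/2 + t))` lie on `W` and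
satisfy `2S = 2T = P`, where `P = (1, c/2)`. -/
theorem halving_points_S_T (a c s t : ℂ)
    (hs : s ^ 2 = (1 - c / 2) ^ 2 - a ^ 2) (ht : t ^ 2 = (1 + c / 2) ^ 2 - a ^ 2)
    (W : Affine ℂ)
    (hW : W = { a₁ := 0, a₂ := c ^ 2 / 4 - 1 - a ^ 2, a₃ := 0, a₄ := a ^ 2, a₆ := 0 })
    (hΔ : W.Δ ≠ 0) :
    ∃ (hS : W.Nonsingular (1 - c / 2 - s) (s * (1 - c / 2 - s)))
      (hT : W.Nonsingular (1 + c / 2 + t) (t * (1 + c / 2 + t)))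
      (hP : W.Nonsingular 1 (c / 2)),
      2 • Affine.Point.some _ _ hS = Affine.Point.some _ _ hP ∧
      2 • Affine.Point.some _ _ hT = Affine.Point.some _ _ hP := by
  subst hW
  exact ⟨WeierstrassModel.nonsingular_S hΔ hs, WeierstrassModel.nonsingular_T hΔ ht,
    WeierstrassModel.nonsingular_P hΔ, WeierstrassModel.two_nsmul_S hΔ hs,
    WeierstrassModel.two_nsmul_T hΔ ht⟩
end

section
/- Let a, c ∈ ℂ and assume the Weierstrass curve W : Y² = X³ + (c²/4 − 1 − a²)X² + a²X over ℂ is nonsingular (its discriminant is nonzero). Let s ∈ ℂ satisfy s² = (1 − c/2)² − a², and define the points S₊ = (1 − c/2 − s, s(1 − c/2 − s)) and S₋ = (1 − c/2 + s, −s(1 − c/2 + s)) on W. Then under the elliptic curve group law S₊ + S₋ = −Q, where Q = (a², c a²/2), i.e. S₊ + S₋ = (a², −c a²/2). -/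
/-!
Since `s² = (1 - c/2)² - a²`, the chord through `S₊` and `S₋` is the line `Y = a² - (1 - c/2) X`,
which meets `W` a third time at `Q = (a², ca²/2)`; hence `S₊ + S₋ + Q = 0`. The chord is a genuine
secant because `Δ = 16 a⁴ s² ((1 + c/2)² - a²)` forces `s ≠ 0`.
-/

open WeierstrassCurve

variable {F : Type*} [Field F]

lemma WeierstrassCurve.Affine.slope_of_sub_add [DecidableEq F] {W : Affine F} {u s : F}
    (hx : u - s ≠ u + s) : W.slope (u - s) (u + s) (s * (u - s)) (-s * (u + s)) = -u := by
  rw [slope_of_X_ne hx, div_eq_iff (sub_ne_zero.mpr hx)]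
  ring

/-- The Weierstrass model of the curve `a(x + 1/x) + (y + 1/y) + c = 0`. -/
def biquadraticModel (a c : F) : Affine F :=
  { a₁ := 0, a₂ := c ^ 2 / 4 - 1 - a ^ 2, a₃ := 0, a₄ := a ^ 2, a₆ := 0 }

namespace biquadraticModel

variable (a c : F)

lemma negY_eq (x y : F) : (biquadraticModel a c).negY x y = -y := by
  simp [biquadraticModel, Affine.negY]

variable [CharZero F]

lemma Δ_eq : (biquadraticModel a c).Δ =
    16 * a ^ 4 * ((1 - c / 2) ^ 2 - a ^ 2) * ((1 + c / 2) ^ 2 - a ^ 2) := by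
  simp only [biquadraticModel, Δ, b₂, b₄, b₆, b₈]
  ring

lemma equation_of_sq_eq {t : F} (ht : t ^ 2 = (1 - c / 2) ^ 2 - a ^ 2) :
    (biquadraticModel a c).Equation (1 - c / 2 - t) (t * (1 - c / 2 - t)) := by
  rw [Affine.equation_iff]
  simp only [biquadraticModel]
  linear_combination ((1 - c / 2 - t) ^ 2 - (1 - c / 2 - t)) * ht

lemma equation_sq_X {y : F} (hy : y ^ 2 = (c * a ^ 2 / 2) ^ 2) :
    (biquadraticModel a c).Equation (a ^ 2) y := by
  rw [Affine.equation_iff]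
  simp only [biquadraticModel]
  linear_combination hy

/-- The chord through `S₊` and `S₋` has slope `-(1 - c/2)`; its third intersection with the curve
is `Q = (a², ca²/2)`. -/
lemma some_add_some [DecidableEq F] {s : F} (hs : s ^ 2 = (1 - c / 2) ^ 2 - a ^ 2) (hs0 : s ≠ 0)
    (hSp : (biquadraticModel a c).Nonsingular (1 - c / 2 - s) (s * (1 - c / 2 - s)))
    (hSm : (biquadraticModel a c).Nonsingular (1 - c / 2 + s) (-s * (1 - c / 2 + s)))
    (hQ' : (biquadraticModel a c).Nonsingular (a ^ 2) (-(c * a ^ 2 / 2))) :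
    .some _ _ hSp + .some _ _ hSm = Affine.Point.some _ _ hQ' := by
  have hx : 1 - c / 2 - s ≠ 1 - c / 2 + s := fun h ↦ hs0 (by linear_combination (-1 / 2 : F) * h)
  rw [Affine.Point.add_of_X_ne hx, Affine.Point.some.injEq, Affine.slope_of_sub_add hx]
  simp only [biquadraticModel, Affine.addX, Affine.addY, Affine.negAddY, Affine.negY]
  constructor
  · ring
  · linear_combination hs

end biquadraticModel

/-- On the nonsingular Weierstrass curve `W : Y² = X³ + (c²/4 − 1 − a²)X² + a²X` over `ℂ`,
with `s² = (1 − c/2)² − a²`, the points `S₊ = (1 − c/2 − s, s(1 − c/2 − s))` and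
`S₋ = (1 − c/2 + s, −s(1 − c/2 + s))` satisfy `S₊ + S₋ = −Q = (a², −ca²/2)`, where
`Q = (a², ca²/2)`. -/
theorem sum_S_plus_S_minus (a c s : ℂ) (hs : s ^ 2 = (1 - c / 2) ^ 2 - a ^ 2)
    (W : Affine ℂ)
    (hW : W = { a₁ := 0, a₂ := c ^ 2 / 4 - 1 - a ^ 2, a₃ := 0, a₄ := a ^ 2, a₆ := 0 })
    (hΔ : W.Δ ≠ 0) :
    ∃ (hSp : W.Nonsingular (1 - c / 2 - s) (s * (1 - c / 2 - s)))
      (hSm : W.Nonsingular (1 - c / 2 + s) (-s * (1 - c / 2 + s)))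
      (hQ : W.Nonsingular (a ^ 2) (c * a ^ 2 / 2))
      (hQ' : W.Nonsingular (a ^ 2) (-(c * a ^ 2 / 2))),
      Affine.Point.some _ _ hSp + Affine.Point.some _ _ hSm = Affine.Point.some _ _ hQ' ∧
      Affine.Point.some _ _ hSp + Affine.Point.some _ _ hSm = -Affine.Point.some _ _ hQ := by
  obtain rfl : W = biquadraticModel a c := hW
  have nonsingular {x y : ℂ} (h : (biquadraticModel a c).Equation x y) :
      (biquadraticModel a c).Nonsingular x y :=
    (Affine.equation_iff_nonsingular_of_Δ_ne_zero hΔ).mp h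
  have hs0 : s ≠ 0 := by
    rintro rfl
    apply hΔ
    rw [biquadraticModel.Δ_eq, ← hs]
    ring
  have hSp := nonsingular (biquadraticModel.equation_of_sq_eq a c hs)
  have hSm : (biquadraticModel a c).Nonsingular (1 - c / 2 + s) (-s * (1 - c / 2 + s)) := by
    simpa only [sub_neg_eq_add] using
      nonsingular (biquadraticModel.equation_of_sq_eq a c (t := -s) (by rw [neg_sq, hs]))
  have hQ := nonsingular (biquadraticModel.equation_sq_X a c (y := c * a ^ 2 / 2) rfl)
  have hQ' := nonsingular (biquadraticModel.equation_sq_X a c (y := -(c * a ^ 2 / 2)) (neg_sq _))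
  have hsum := biquadraticModel.some_add_some a c hs hs0 hSp hSm hQ'
  refine ⟨hSp, hSm, hQ, hQ', hsum, ?_⟩
  rw [hsum, Affine.Point.neg_some, Affine.Point.some.injEq]
  exact ⟨rfl, (biquadraticModel.negY_eq a c _ _).symm⟩
end

section
/- Let a > 1 be real. Suppose X, Y ∈ ℝ satisfy Y² = X(X − 2a²/(a² + 1))(X − (a² + 1)/2) and (a² + 1)X ≠ 2a². Define X' = 2(a² + 1)Y² / ((a² + 1)X − 2a²)² and Y' = (2^{3/2}/(a² + 1)^{3/2}) · Y · (1 + a²(a² − 1)² / ((a² + 1)X − 2a²)²). Then Y'² = X'(X'² + (2(a⁴ − 6a² + 1)/(a² + 1)²)·X' + 1). -/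
/-! Squaring `Y'` removes the fractional powers, leaving `8 Y² (1 + a²(a²−1)²/d²)² / (a²+1)³`
with `d = (a²+1)X − 2a²`; after substituting the first curve's equation for `Y²` on both sides,
the claim is an identity of rational functions in `a` and `X`, valid over any field in which
`2`, `a² + 1` and `d` are invertible. -/

lemma Real.rpow_natCast_div_two_sq {x : ℝ} (hx : 0 ≤ x) (n : ℕ) :
    (x ^ ((n : ℝ) / 2)) ^ 2 = x ^ n := by
  rw [← Real.rpow_natCast _ 2, ← Real.rpow_mul hx, Nat.cast_ofNat,
    div_mul_cancel₀ _ two_ne_zero, Real.rpow_natCast]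

lemma isogeny_image_sq_eq {K : Type*} [Field K] {a X Y : K} (h2 : (2 : K) ≠ 0)
    (hs : a ^ 2 + 1 ≠ 0) (hd : (a ^ 2 + 1) * X - 2 * a ^ 2 ≠ 0)
    (hXY : Y ^ 2 = X * (X - 2 * a ^ 2 / (a ^ 2 + 1)) * (X - (a ^ 2 + 1) / 2)) :
    let X' := 2 * (a ^ 2 + 1) * Y ^ 2 / ((a ^ 2 + 1) * X - 2 * a ^ 2) ^ 2
    8 / (a ^ 2 + 1) ^ 3 * Y ^ 2 *
        (1 + a ^ 2 * (a ^ 2 - 1) ^ 2 / ((a ^ 2 + 1) * X - 2 * a ^ 2) ^ 2) ^ 2 =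
      X' * (X' ^ 2 + 2 * (a ^ 4 - 6 * a ^ 2 + 1) / (a ^ 2 + 1) ^ 2 * X' + 1) := by
  intro X'
  -- the form in which `field_simp` meets the denominator after normalizing
  have hd' : (a ^ 2 + 1) * X - a ^ 2 * 2 ≠ 0 := by rwa [mul_comm (a ^ 2)]
  simp only [X', hXY]
  field_simp
  ring

theorem isogeny_well_defined_general (a X Y : ℝ)
    (hXY : Y ^ 2 = X * (X - 2 * a ^ 2 / (a ^ 2 + 1)) * (X - (a ^ 2 + 1) / 2))
    (hden : (a ^ 2 + 1) * X ≠ 2 * a ^ 2) :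
    let X' := 2 * (a ^ 2 + 1) * Y ^ 2 / ((a ^ 2 + 1) * X - 2 * a ^ 2) ^ 2
    let Y' := 2 ^ ((3:ℝ) / 2) / (a ^ 2 + 1) ^ ((3:ℝ) / 2) * Y *
      (1 + a ^ 2 * (a ^ 2 - 1) ^ 2 / ((a ^ 2 + 1) * X - 2 * a ^ 2) ^ 2)
    Y' ^ 2 = X' * (X' ^ 2 + 2 * (a ^ 4 - 6 * a ^ 2 + 1) / (a ^ 2 + 1) ^ 2 * X' + 1) := by
  intro X' Y'
  have hs : (0 : ℝ) < a ^ 2 + 1 := by positivity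
  have two_rpow_sq : ((2 : ℝ) ^ ((3 : ℝ) / 2)) ^ 2 = 8 := by
    simpa using (Real.rpow_natCast_div_two_sq zero_le_two 3).trans (by norm_num)
  have s_rpow_sq : ((a ^ 2 + 1) ^ ((3 : ℝ) / 2)) ^ 2 = (a ^ 2 + 1) ^ 3 := by
    exact_mod_cast Real.rpow_natCast_div_two_sq hs.le 3
  calc Y' ^ 2 = 8 / (a ^ 2 + 1) ^ 3 * Y ^ 2 *
        (1 + a ^ 2 * (a ^ 2 - 1) ^ 2 / ((a ^ 2 + 1) * X - 2 * a ^ 2) ^ 2) ^ 2 := by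
        rw [mul_pow, mul_pow, div_pow, two_rpow_sq, s_rpow_sq]
    _ = _ := isogeny_image_sq_eq two_ne_zero hs.ne' (sub_ne_zero.mpr hden) hXY

/-- The degree-2 isogeny `φ` of Section 5 is well-defined: for real `a > 1`, if `(X, Y)` lies
on `Y² = X(X − 2a²/(a²+1))(X − (a²+1)/2)` and `(a²+1)X ≠ 2a²`, then the image point
`(X', Y')` lies on `Y'² = X'(X'² + (2(a⁴−6a²+1)/(a²+1)²)X' + 1)`. -/
theorem isogeny_well_defined (a X Y : ℝ) (ha : 1 < a)
    (hXY : Y ^ 2 = X * (X - 2 * a ^ 2 / (a ^ 2 + 1)) * (X - (a ^ 2 + 1) / 2))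
    (hden : (a ^ 2 + 1) * X ≠ 2 * a ^ 2) :
    let X' := 2 * (a ^ 2 + 1) * Y ^ 2 / ((a ^ 2 + 1) * X - 2 * a ^ 2) ^ 2
    let Y' := 2 ^ ((3:ℝ) / 2) / (a ^ 2 + 1) ^ ((3:ℝ) / 2) * Y *
      (1 + a ^ 2 * (a ^ 2 - 1) ^ 2 / ((a ^ 2 + 1) * X - 2 * a ^ 2) ^ 2)
    Y' ^ 2 = X' * (X' ^ 2 + 2 * (a ^ 4 - 6 * a ^ 2 + 1) / (a ^ 2 + 1) ^ 2 * X' + 1) :=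
  isogeny_well_defined_general a X Y hXY hden
end

section
/- The function s ↦ −24·(−1 + 3·3^{−s} + 49·7^{−s} − 147·21^{−s})·ζ(s − 1)·ζ(s), defined for complex s ≠ 2 near 2 (where ζ is the Riemann zeta function), tends to (8π²/3)·log 7 as s → 2 with s ≠ 2. -/
/-!
At `s = 2` the factor `ζ(s - 1)` has a simple pole of residue 1, which is cancelled by the simple
zero of the finite Dirichlet polynomial `gFactor`. Hence the limit is
`-24 · gFactor'(2) · 1 · ζ(2) = -24 · (-(2/3) log 7) · π²/6 = (8π²/3) log 7`.
-/

open Real Complex Filter Topology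

theorem HasDerivAt.tendsto_mul_of_simple_pole {𝕜 : Type*} [NontriviallyNormedField 𝕜]
    {f g : 𝕜 → 𝕜} {a f' r : 𝕜} (hf : HasDerivAt f f' a) (hfa : f a = 0)
    (hg : Tendsto (fun s => (s - a) * g s) (𝓝[≠] a) (𝓝 r)) :
    Tendsto (fun s => f s * g s) (𝓝[≠] a) (𝓝 (f' * r)) := by
  refine ((hasDerivAt_iff_tendsto_slope.mp hf).mul hg).congr' ?_
  filter_upwards [self_mem_nhdsWithin] with s hs
  have : s - a ≠ 0 := sub_ne_zero.mpr hs
  rw [slope_def_field, hfa, sub_zero]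
  field_simp

theorem tendsto_sub_two_mul_riemannZeta_sub_one :
    Tendsto (fun s : ℂ => (s - 2) * riemannZeta (s - 1)) (𝓝[≠] 2) (𝓝 1) := by
  have hshift : Tendsto (· - 1 : ℂ → ℂ) (𝓝[≠] 2) (𝓝[≠] 1) := by
    rw [tendsto_iff_comap, ← map_le_iff_le_comap, map_subRight_nhdsNE]
    norm_num
  convert riemannZeta_residue_one.comp hshift using 2 with s
  simp only [Function.comp_apply]
  ring

theorem hasDerivAt_const_cpow_neg {c : ℂ} (hc : c ≠ 0) (a : ℂ) :
    HasDerivAt (fun s : ℂ => c ^ (-s)) (-(c ^ (-a) * Complex.log c)) a := by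
  simpa using (hasDerivAt_neg a).const_cpow (c := c) (Or.inl hc)

/-- `L(g, s) = -24 · gFactor s · ζ(s - 1) · ζ(s)`. -/
noncomputable def gFactor (s : ℂ) : ℂ :=
  -1 + 3 * (3 : ℂ) ^ (-s) + 49 * (7 : ℂ) ^ (-s) - 147 * (21 : ℂ) ^ (-s)

theorem gFactor_two : gFactor 2 = 0 := by
  norm_num [gFactor, cpow_neg, cpow_two]

theorem hasDerivAt_gFactor_two : HasDerivAt gFactor (-(2 / 3 * Complex.log 7)) 2 := by
  have h := ((((hasDerivAt_const (2 : ℂ) (-1 : ℂ)).add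
    ((hasDerivAt_const_cpow_neg (c := 3) (by norm_num) 2).const_mul 3)).add
    ((hasDerivAt_const_cpow_neg (c := 7) (by norm_num) 2).const_mul 49)).sub
    ((hasDerivAt_const_cpow_neg (c := 21) (by norm_num) 2).const_mul 147))
  refine h.congr_deriv ?_
  have hlog : Complex.log 21 = Complex.log 3 + Complex.log 7 := by
    rw [← ofNat_log, ← ofNat_log, ← ofNat_log, ← ofReal_add,
      ← Real.log_mul (by norm_num) (by norm_num)]
    norm_num
  rw [hlog]
  norm_num [cpow_neg, cpow_two]
  ring

/-- The evaluation `L(g, 2) = (8π²/3) log 7` in the proof of Lemma 9 (`lem38log7`): the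
function `s ↦ −24(−1 + 3·3^{−s} + 49·7^{−s} − 147·21^{−s})ζ(s−1)ζ(s)` tends to
`(8π²/3) log 7` as `s → 2`, `s ≠ 2`. -/
theorem L_g_at_two :
    Tendsto (fun s : ℂ =>
        -24 * (-1 + 3 * (3 : ℂ) ^ (-s) + 49 * (7 : ℂ) ^ (-s) - 147 * (21 : ℂ) ^ (-s)) *
          riemannZeta (s - 1) * riemannZeta s)
      (nhdsWithin 2 {(2 : ℂ)}ᶜ)
      (nhds ((8 * π ^ 2 / 3 * Real.log 7 : ℝ) : ℂ)) := by
  have hzeta : Tendsto riemannZeta (𝓝[≠] 2) (𝓝 ((π : ℂ) ^ 2 / 6)) :=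
    riemannZeta_two ▸ (differentiableAt_riemannZeta (by norm_num)).continuousAt.continuousWithinAt
  have h := ((hasDerivAt_gFactor_two.tendsto_mul_of_simple_pole gFactor_two
    tendsto_sub_two_mul_riemannZeta_sub_one).const_mul (-24)).mul hzeta
  convert h using 2 with s
  · simp only [gFactor]
    ring
  · push_cast
    rw [ofNat_log]
    ring
end
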